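/- arXiv:1210.4381 — 4 statements merged into one kernel-verified Lean document; each statement's English description precedes it below -/
import Mathlib

section
/- Let C_x be a symmetric positive semidefinite N×N real matrix, C_n a symmetric positive definite M×M real matrix, and fix vectors a ∈ ℝ^N and b ∈ ℝ^M. Define w(H) = H a + b and C_yy(H) = H C_x Hᵀ + C_n. Then the map H ↦ w(H)ᵀ C_yy(H)^{−1} w(H) on M×N real matrices is differentiable, and its gradient at H equals −2 C_yy^{−1} w wᵀ C_yy^{−1} H C_x + 2 C_yy^{−1} w aᵀ, where w = w(H) and C_yy = C_yy(H). -/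
open Matrix Asymptotics Filter Topology

attribute [local instance] Matrix.normedAddCommGroup Matrix.normedSpace

noncomputable def bilCLM {E F G : Type*} [NormedAddCommGroup E] [NormedSpace ℝ E]
    [FiniteDimensional ℝ E] [NormedAddCommGroup F] [NormedSpace ℝ F] [FiniteDimensional ℝ F]
    [NormedAddCommGroup G] [NormedSpace ℝ G] (b : E →ₗ[ℝ] F →ₗ[ℝ] G) : E →L[ℝ] F →L[ℝ] G :=
  LinearMap.toContinuousLinearMap
    { toFun := fun x => LinearMap.toContinuousLinearMap (b x),
      map_add' := by intros x y; ext z; simp,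
      map_smul' := by intros c x; ext z; simp }

@[simp] lemma bilCLM_apply {E F G : Type*} [NormedAddCommGroup E] [NormedSpace ℝ E]
    [FiniteDimensional ℝ E] [NormedAddCommGroup F] [NormedSpace ℝ F] [FiniteDimensional ℝ F]
    [NormedAddCommGroup G] [NormedSpace ℝ G] (b : E →ₗ[ℝ] F →ₗ[ℝ] G) (x : E) (y : F) :
    bilCLM b x y = b x y := rfl

lemma matrix_norm_mul_le {m n p : ℕ} (A : Matrix (Fin m) (Fin n) ℝ) (B : Matrix (Fin n) (Fin p) ℝ) :
    ‖A * B‖ ≤ (n : ℝ) * ‖A‖ * ‖B‖ := by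
  rw [Matrix.norm_le_iff (by positivity)]
  intro i j
  rw [Matrix.mul_apply]
  calc ‖∑ k, A i k * B k j‖ ≤ ∑ k, ‖A i k * B k j‖ := norm_sum_le _ _
    _ ≤ ∑ _k : Fin n, ‖A‖ * ‖B‖ := Finset.sum_le_sum fun k _ => by
        rw [norm_mul]
        exact mul_le_mul (A.norm_entry_le_entrywise_sup_norm)
          (B.norm_entry_le_entrywise_sup_norm) (norm_nonneg _) (norm_nonneg _)
    _ = (n : ℝ) * ‖A‖ * ‖B‖ := by simp [Finset.sum_const, mul_assoc]

noncomputable def invDerivCLM {m : ℕ} (A : Matrix (Fin m) (Fin m) ℝ) :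
    Matrix (Fin m) (Fin m) ℝ →L[ℝ] Matrix (Fin m) (Fin m) ℝ :=
  LinearMap.toContinuousLinearMap
    { toFun := fun Δ => -(A⁻¹ * Δ * A⁻¹),
      map_add' := by intros x y; simp [Matrix.mul_add, Matrix.add_mul, neg_add]; abel,
      map_smul' := by intros c x; simp [Matrix.mul_smul, Matrix.smul_mul] }

@[simp] lemma invDerivCLM_apply {m : ℕ} (A Δ : Matrix (Fin m) (Fin m) ℝ) :
    invDerivCLM A Δ = -(A⁻¹ * Δ * A⁻¹) := rfl

lemma hasFDerivAt_matrix_inv {m : ℕ} (A : Matrix (Fin m) (Fin m) ℝ) (hA : IsUnit A.det) :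
    HasFDerivAt Inv.inv (invDerivCLM A) A := by
  have hdet : A.det ≠ 0 := hA.ne_zero
  have hdetc : ContinuousAt Matrix.det A := (Continuous.matrix_det continuous_id).continuousAt
  have hinvc : ContinuousAt Inv.inv A := by
    refine continuousAt_matrix_inv A ?_
    rw [Ring.inverse_eq_inv']
    exact continuousAt_inv₀ hdet
  apply hasFDerivAt_iff_isLittleO_nhds_zero.mpr
  rw [isLittleO_iff]
  intro c hc
  set K : ℝ := (m : ℝ) ^ 2 * ‖A⁻¹‖ + 1 with hK
  have hKpos : 0 < K := by positivity
  have baseT : Tendsto (fun h : Matrix (Fin m) (Fin m) ℝ => A + h) (𝓝 0) (𝓝 A) := by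
    simpa using (tendsto_const_nhds.add tendsto_id :
      Tendsto (fun h : Matrix (Fin m) (Fin m) ℝ => A + h) (𝓝 0) (𝓝 (A + 0)))
  have ev1 : ∀ᶠ h : Matrix (Fin m) (Fin m) ℝ in 𝓝 0, (A + h).det ≠ 0 :=
    (hdetc.tendsto.comp baseT).eventually_ne hdet
  have ev2 : ∀ᶠ h : Matrix (Fin m) (Fin m) ℝ in 𝓝 0, ‖(A + h)⁻¹ - A⁻¹‖ < c / K := by
    have ht : Tendsto (fun h : Matrix (Fin m) (Fin m) ℝ => (A + h)⁻¹ - A⁻¹) (𝓝 0) (𝓝 0) := by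
      have := hinvc.tendsto.comp baseT
      simpa using this.sub_const A⁻¹
    have := Metric.tendsto_nhds.mp ht (c / K) (by positivity)
    simpa [dist_eq_norm] using this
  filter_upwards [ev1, ev2] with h h1 h2
  set X := A + h with hX
  have hXd : IsUnit X.det := isUnit_iff_ne_zero.mpr h1
  have hXinv : X⁻¹ * X = 1 := nonsing_inv_mul X hXd
  have hAinv : A * A⁻¹ = 1 := mul_nonsing_inv A hA
  have hh : h = X - A := by simp [hX]
  have e1 : X⁻¹ * ((X - A) * A⁻¹) = A⁻¹ - X⁻¹ := by
    rw [Matrix.sub_mul, Matrix.mul_sub, ← Matrix.mul_assoc, hXinv, Matrix.one_mul,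
      ← Matrix.mul_assoc, Matrix.mul_assoc X⁻¹ A A⁻¹, hAinv, Matrix.mul_one]
  have key : X⁻¹ - A⁻¹ - invDerivCLM A h = (A⁻¹ - X⁻¹) * ((X - A) * A⁻¹) := by
    rw [invDerivCLM_apply, sub_neg_eq_add, hh, Matrix.sub_mul, e1, Matrix.mul_assoc]
    abel
  have hgoal : (A + h)⁻¹ - A⁻¹ - invDerivCLM A h = (A⁻¹ - X⁻¹) * ((X - A) * A⁻¹) := key
  refine le_of_eq_of_le (congrArg norm hgoal) ?_
  have b1 : ‖(A⁻¹ - X⁻¹) * ((X - A) * A⁻¹)‖ ≤ (m : ℝ) * ‖A⁻¹ - X⁻¹‖ * ‖(X - A) * A⁻¹‖ :=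
    matrix_norm_mul_le _ _
  have b2 : ‖(X - A) * A⁻¹‖ ≤ (m : ℝ) * ‖X - A‖ * ‖A⁻¹‖ := matrix_norm_mul_le _ _
  have hd : ‖A⁻¹ - X⁻¹‖ ≤ c / K := by
    rw [norm_sub_rev]; exact le_of_lt h2
  have hdK : ‖A⁻¹ - X⁻¹‖ * K ≤ c := by
    rw [← le_div_iff₀ hKpos] at *; exact hd
  have hXA : ‖X - A‖ = ‖h‖ := by rw [← hh]
  calc ‖(A⁻¹ - X⁻¹) * ((X - A) * A⁻¹)‖
      ≤ (m : ℝ) * ‖A⁻¹ - X⁻¹‖ * ((m : ℝ) * ‖X - A‖ * ‖A⁻¹‖) := by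
        refine b1.trans ?_
        exact mul_le_mul_of_nonneg_left b2 (by positivity)
    _ ≤ c * ‖h‖ := by
        rw [hXA]
        nlinarith [norm_nonneg h, norm_nonneg (A⁻¹ - X⁻¹),
          norm_nonneg (A⁻¹ : Matrix (Fin m) (Fin m) ℝ),
          mul_nonneg (mul_nonneg (sq_nonneg (m:ℝ)) (norm_nonneg (A⁻¹ - X⁻¹))) (norm_nonneg h)]

lemma dotMV {m n : ℕ} (A : Matrix (Fin m) (Fin n) ℝ) (x : Fin m → ℝ) (y : Fin n → ℝ) :
    x ⬝ᵥ (A *ᵥ y) = (Aᵀ *ᵥ x) ⬝ᵥ y := by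
  rw [Matrix.dotProduct_mulVec, Matrix.mulVec_transpose]

lemma mul_vecMulVec' {m n p : ℕ} (A : Matrix (Fin m) (Fin n) ℝ) (x : Fin n → ℝ) (y : Fin p → ℝ) :
    A * vecMulVec x y = vecMulVec (A *ᵥ x) y := by
  ext i j
  simp only [Matrix.mul_apply, vecMulVec_apply, Matrix.mulVec, dotProduct, Finset.sum_mul]
  exact Finset.sum_congr rfl fun k _ => by ring

lemma vecMulVec_mul' {m n p : ℕ} (x : Fin m → ℝ) (y : Fin n → ℝ) (B : Matrix (Fin n) (Fin p) ℝ) :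
    vecMulVec x y * B = vecMulVec x (Bᵀ *ᵥ y) := by
  ext i j
  simp only [Matrix.mul_apply, vecMulVec_apply, Matrix.mulVec, dotProduct, transpose_apply,
    Finset.mul_sum]
  exact Finset.sum_congr rfl fun k _ => by ring

lemma trace_vecMulVec_mul {m n : ℕ} (x : Fin m → ℝ) (y : Fin n → ℝ)
    (Δ : Matrix (Fin m) (Fin n) ℝ) :
    ((vecMulVec x y)ᵀ * Δ).trace = x ⬝ᵥ (Δ *ᵥ y) := by
  simp only [Matrix.trace, Matrix.diag, Matrix.mul_apply, transpose_apply, vecMulVec_apply,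
    dotProduct, Matrix.mulVec, Finset.mul_sum]
  rw [Finset.sum_comm]
  exact Finset.sum_congr rfl fun i _ => Finset.sum_congr rfl fun j _ => by ring

/-- For `Cx` psd, `Cn` pd and fixed vectors `a ∈ ℝ^N`, `b ∈ ℝ^M`, with
`w(H) = H a + b` and `Cyy(H) = H Cx Hᵀ + Cn`, the map `H ↦ w(H)ᵀ Cyy(H)⁻¹ w(H)` is
differentiable with gradient `−2 Cyy⁻¹ w wᵀ Cyy⁻¹ H Cx + 2 Cyy⁻¹ w aᵀ`. -/
theorem hasGradient_mahalanobis_along_path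
    {M N : ℕ} (Cx : Matrix (Fin N) (Fin N) ℝ) (Cn : Matrix (Fin M) (Fin M) ℝ)
    (hCx : Cx.PosSemidef) (hCn : Cn.PosDef) (a : Fin N → ℝ) (b : Fin M → ℝ)
    (H : Matrix (Fin M) (Fin N) ℝ) :
    ∃ L : Matrix (Fin M) (Fin N) ℝ →L[ℝ] ℝ,
      HasFDerivAt
        (fun H' : Matrix (Fin M) (Fin N) ℝ =>
          (H' *ᵥ a + b) ⬝ᵥ (H' * Cx * H'ᵀ + Cn)⁻¹ *ᵥ (H' *ᵥ a + b)) L H ∧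
      ∀ Δ : Matrix (Fin M) (Fin N) ℝ,
        L Δ = ((((-2 : ℝ) • ((H * Cx * Hᵀ + Cn)⁻¹ * vecMulVec (H *ᵥ a + b) (H *ᵥ a + b) *
              (H * Cx * Hᵀ + Cn)⁻¹ * H * Cx)
            + (2 : ℝ) • vecMulVec ((H * Cx * Hᵀ + Cn)⁻¹ *ᵥ (H *ᵥ a + b)) a)ᵀ) * Δ).trace := by
  classical
  have hCxT : Cxᵀ = Cx := by
    have := hCx.isHermitian
    rwa [Matrix.IsHermitian, conjTranspose_eq_transpose_of_trivial] at this
  have hCnT : Cnᵀ = Cn := by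
    have := hCn.isHermitian
    rwa [Matrix.IsHermitian, conjTranspose_eq_transpose_of_trivial] at this
  have hCyyPD : (H * Cx * Hᵀ + Cn).PosDef := by
    have h1 : (H * Cx * Hᵀ).PosSemidef := by
      have := hCx.mul_mul_conjTranspose_same H
      rwa [conjTranspose_eq_transpose_of_trivial] at this
    exact Matrix.PosDef.posSemidef_add h1 hCn
  have hdet : IsUnit (H * Cx * Hᵀ + Cn).det := hCyyPD.det_pos.ne'.isUnit
  have hCyyT : (H * Cx * Hᵀ + Cn)ᵀ = H * Cx * Hᵀ + Cn := by
    simp [Matrix.transpose_add, Matrix.transpose_mul, Matrix.transpose_transpose, hCxT, hCnT,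
      Matrix.mul_assoc]
  have hiCT : ((H * Cx * Hᵀ + Cn)⁻¹)ᵀ = (H * Cx * Hᵀ + Cn)⁻¹ := by
    rw [Matrix.transpose_nonsing_inv, hCyyT]
  -- continuous (bi)linear maps
  let Wl : Matrix (Fin M) (Fin N) ℝ →ₗ[ℝ] (Fin M → ℝ) :=
    { toFun := fun Δ => Δ *ᵥ a,
      map_add' := fun X Y => Matrix.add_mulVec X Y a,
      map_smul' := fun c X => Matrix.smul_mulVec c X a }
  let Wc : Matrix (Fin M) (Fin N) ℝ →L[ℝ] (Fin M → ℝ) := LinearMap.toContinuousLinearMap Wl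
  let βB : Matrix (Fin M) (Fin N) ℝ →L[ℝ] Matrix (Fin M) (Fin N) ℝ →L[ℝ]
      Matrix (Fin M) (Fin M) ℝ :=
    bilCLM (LinearMap.mk₂ ℝ (fun X Y => X * Cx * Yᵀ)
      (by intros; simp [Matrix.add_mul])
      (by intros; simp [Matrix.smul_mul])
      (by intros; simp [Matrix.transpose_add, Matrix.mul_add])
      (by intros; simp [Matrix.transpose_smul, Matrix.mul_smul]))
  let dotB : (Fin M → ℝ) →L[ℝ] (Fin M → ℝ) →L[ℝ] ℝ :=
    bilCLM (LinearMap.mk₂ ℝ (fun x y => x ⬝ᵥ y)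
      (fun x y z => add_dotProduct x y z)
      (fun c x y => smul_dotProduct c x y)
      (fun x y z => dotProduct_add x y z)
      (fun c x y => dotProduct_smul c x y))
  let mvB : Matrix (Fin M) (Fin M) ℝ →L[ℝ] (Fin M → ℝ) →L[ℝ] (Fin M → ℝ) :=
    bilCLM (LinearMap.mk₂ ℝ (fun S v => S *ᵥ v)
      (fun X Y v => Matrix.add_mulVec X Y v)
      (fun c X v => Matrix.smul_mulVec c X v)
      (fun X u v => Matrix.mulVec_add X u v)
      (fun c X v => Matrix.mulVec_smul X c v))
  have hw : HasFDerivAt (fun H' : Matrix (Fin M) (Fin N) ℝ => H' *ᵥ a + b) Wc H := by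
    exact Wc.hasFDerivAt.add_const b
  have hg : HasFDerivAt (fun H' : Matrix (Fin M) (Fin N) ℝ => H' * Cx * H'ᵀ + Cn)
      (βB.precompR (Matrix (Fin M) (Fin N) ℝ) H (ContinuousLinearMap.id ℝ _)
        + βB.precompL (Matrix (Fin M) (Fin N) ℝ) (ContinuousLinearMap.id ℝ _) H) H := by
    exact (βB.hasFDerivAt_of_bilinear (hasFDerivAt_id H) (hasFDerivAt_id H)).add_const Cn
  have hi : HasFDerivAt (fun H' : Matrix (Fin M) (Fin N) ℝ => (H' * Cx * H'ᵀ + Cn)⁻¹)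
      ((invDerivCLM (H * Cx * Hᵀ + Cn)).comp
        (βB.precompR (Matrix (Fin M) (Fin N) ℝ) H (ContinuousLinearMap.id ℝ _)
          + βB.precompL (Matrix (Fin M) (Fin N) ℝ) (ContinuousLinearMap.id ℝ _) H)) H := by
    exact (hasFDerivAt_matrix_inv _ hdet).comp H hg
  have hm : HasFDerivAt
      (fun H' : Matrix (Fin M) (Fin N) ℝ => (H' * Cx * H'ᵀ + Cn)⁻¹ *ᵥ (H' *ᵥ a + b))
      (mvB.precompR (Matrix (Fin M) (Fin N) ℝ) ((H * Cx * Hᵀ + Cn)⁻¹) Wc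
        + mvB.precompL (Matrix (Fin M) (Fin N) ℝ)
          ((invDerivCLM (H * Cx * Hᵀ + Cn)).comp
            (βB.precompR (Matrix (Fin M) (Fin N) ℝ) H (ContinuousLinearMap.id ℝ _)
              + βB.precompL (Matrix (Fin M) (Fin N) ℝ) (ContinuousLinearMap.id ℝ _) H))
          (H *ᵥ a + b)) H := by
    exact mvB.hasFDerivAt_of_bilinear hi hw
  have hf : HasFDerivAt
      (fun H' : Matrix (Fin M) (Fin N) ℝ =>
        (H' *ᵥ a + b) ⬝ᵥ (H' * Cx * H'ᵀ + Cn)⁻¹ *ᵥ (H' *ᵥ a + b))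
      (dotB.precompR (Matrix (Fin M) (Fin N) ℝ) (H *ᵥ a + b)
        (mvB.precompR (Matrix (Fin M) (Fin N) ℝ) ((H * Cx * Hᵀ + Cn)⁻¹) Wc
          + mvB.precompL (Matrix (Fin M) (Fin N) ℝ)
            ((invDerivCLM (H * Cx * Hᵀ + Cn)).comp
              (βB.precompR (Matrix (Fin M) (Fin N) ℝ) H (ContinuousLinearMap.id ℝ _)
                + βB.precompL (Matrix (Fin M) (Fin N) ℝ) (ContinuousLinearMap.id ℝ _) H))
            (H *ᵥ a + b))
        + dotB.precompL (Matrix (Fin M) (Fin N) ℝ) Wc ((H * Cx * Hᵀ + Cn)⁻¹ *ᵥ (H *ᵥ a + b))) H := by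
    exact dotB.hasFDerivAt_of_bilinear hw hm
  refine ⟨_, hf, fun Δ => ?_⟩
  set iC := (H * Cx * Hᵀ + Cn)⁻¹ with hiCdef
  set w := H *ᵥ a + b with hwdef
  have lhs_eval :
      (dotB.precompR (Matrix (Fin M) (Fin N) ℝ) w
        (mvB.precompR (Matrix (Fin M) (Fin N) ℝ) iC Wc
          + mvB.precompL (Matrix (Fin M) (Fin N) ℝ)
            ((invDerivCLM (H * Cx * Hᵀ + Cn)).comp
              (βB.precompR (Matrix (Fin M) (Fin N) ℝ) H (ContinuousLinearMap.id ℝ _)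
                + βB.precompL (Matrix (Fin M) (Fin N) ℝ) (ContinuousLinearMap.id ℝ _) H))
            w)
        + dotB.precompL (Matrix (Fin M) (Fin N) ℝ) Wc (iC *ᵥ w)) Δ
      = w ⬝ᵥ (iC *ᵥ (Δ *ᵥ a) + (-(iC * (H * Cx * Δᵀ + Δ * Cx * Hᵀ) * iC)) *ᵥ w)
          + (Δ *ᵥ a) ⬝ᵥ (iC *ᵥ w) := by
    simp only [ContinuousLinearMap.add_apply, ContinuousLinearMap.precompR_apply,
      ContinuousLinearMap.compL_apply, ContinuousLinearMap.comp_apply,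
      ContinuousLinearMap.precompL_apply, ContinuousLinearMap.coe_comp', Function.comp_apply,
      ContinuousLinearMap.coe_id', id_eq, bilCLM_apply, LinearMap.mk₂_apply,
      invDerivCLM_apply, LinearMap.coe_toContinuousLinearMap', LinearMap.coe_mk, AddHom.coe_mk,
      Wc, βB, dotB, mvB, Wl, hiCdef]
    rfl
  refine lhs_eval.trans ?_
  have hP : iC * vecMulVec w w * iC * H * Cx
      = vecMulVec (iC *ᵥ w) (Cx *ᵥ (Hᵀ *ᵥ (iC *ᵥ w))) := by
    rw [mul_vecMulVec', vecMulVec_mul', vecMulVec_mul', vecMulVec_mul', hiCT, hCxT]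
  have t1 : w ⬝ᵥ (iC *ᵥ (Δ *ᵥ a)) = (iC *ᵥ w) ⬝ᵥ (Δ *ᵥ a) := by
    rw [dotMV, hiCT]
  have t3 : (Δ *ᵥ a) ⬝ᵥ (iC *ᵥ w) = (iC *ᵥ w) ⬝ᵥ (Δ *ᵥ a) := dotProduct_comm _ _
  have hAT : (H * Cx * Δᵀ)ᵀ = Δ * Cx * Hᵀ := by
    simp [Matrix.transpose_mul, hCxT, Matrix.mul_assoc]
  have hβv : Δ *ᵥ (Cx *ᵥ (Hᵀ *ᵥ (iC *ᵥ w))) = (Δ * Cx * Hᵀ) *ᵥ (iC *ᵥ w) := by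
    rw [Matrix.mulVec_mulVec, Matrix.mulVec_mulVec]
  have t2 : w ⬝ᵥ ((-(iC * (H * Cx * Δᵀ + Δ * Cx * Hᵀ) * iC)) *ᵥ w)
      = -(2 * ((iC *ᵥ w) ⬝ᵥ (Δ *ᵥ (Cx *ᵥ (Hᵀ *ᵥ (iC *ᵥ w)))))) := by
    rw [Matrix.neg_mulVec, dotProduct_neg]
    have e : iC *ᵥ ((H * Cx * Δᵀ + Δ * Cx * Hᵀ) *ᵥ (iC *ᵥ w))
        = (iC * (H * Cx * Δᵀ + Δ * Cx * Hᵀ) * iC) *ᵥ w := by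
      rw [Matrix.mulVec_mulVec, Matrix.mulVec_mulVec]
    rw [← e, dotMV iC w, hiCT, Matrix.add_mulVec, dotProduct_add]
    have comm1 : (iC *ᵥ w) ⬝ᵥ ((H * Cx * Δᵀ) *ᵥ (iC *ᵥ w))
        = (iC *ᵥ w) ⬝ᵥ ((Δ * Cx * Hᵀ) *ᵥ (iC *ᵥ w)) := by
      rw [dotMV (H * Cx * Δᵀ), hAT]
      exact dotProduct_comm _ _
    rw [comm1, hβv]
    ring
  rw [dotProduct_add, t1, t2, t3, hP]
  rw [Matrix.transpose_add, Matrix.transpose_smul, Matrix.transpose_smul, Matrix.add_mul,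
    Matrix.smul_mul, Matrix.smul_mul, Matrix.trace_add, Matrix.trace_smul, Matrix.trace_smul,
    trace_vecMulVec_mul, trace_vecMulVec_mul, smul_eq_mul, smul_eq_mul]
  ring
end

section
/- Fix x ∈ ℝ^N and n ∈ ℝ^M, and for an M×N real matrix H write y(H) = Hx + n. For indices (k,l), (r,s) ∈ K×L, define z^{klrs}(H) = (u_{x|y}^{kl}(y(H)))ᵀ u_{x|y}^{rs}(y(H)), where u_{x|y}^{kl}(y) = u_x^k + C_x^k Hᵀ (C_yy^{kl})^{−1}(y − u_y^{kl}). Then H ↦ z^{klrs}(H) is differentiable with gradient D^{klrs}(H) + D^{rskl}(H), where, writing w^{kl} = y(H) − u_y^{kl}(H) and C^{klrs} = (C_yy^{kl})^{−1} w^{kl} (u_{x|y}^{rs})ᵀ C_x^k Hᵀ (C_yy^{kl})^{−1}, one sets D^{klrs} = (C_yy^{kl})^{−1} w^{kl} (u_{x|y}^{rs})ᵀ C_x^k − (C^{klrs} + (C^{klrs})ᵀ) H C_x^k + (C_yy^{kl})^{−1} H C_x^k u_{x|y}^{rs} (x − u_x^k)ᵀ. -/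
open Matrix MeasureTheory ProbabilityTheory
open scoped NNReal ENNReal Classical

attribute [local instance] Matrix.normedAddCommGroup Matrix.normedSpace

/-- The Gaussian density `N(u, C)` evaluated at `t`:
`(2π)^(−M/2) det(C)^(−1/2) exp(−(1/2)(t−u)ᵀ C⁻¹ (t−u))`. -/
noncomputable def gaussianPdf {M : ℕ} (u : Fin M → ℝ)
    (C : Matrix (Fin M) (Fin M) ℝ) (t : Fin M → ℝ) : ℝ :=
  (2 * Real.pi) ^ (-(M : ℝ) / 2) * C.det ^ (-(1 : ℝ) / 2) *
    Real.exp (-(1 / 2) * ((t - u) ⬝ᵥ C⁻¹ *ᵥ (t - u)))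

/-- `Cyy(H) = H Cx Hᵀ + Cn`. -/
def Cyy {M N : ℕ} (Cx : Matrix (Fin N) (Fin N) ℝ) (Cn : Matrix (Fin M) (Fin M) ℝ)
    (H : Matrix (Fin M) (Fin N) ℝ) : Matrix (Fin M) (Fin M) ℝ :=
  H * Cx * Hᵀ + Cn

/-- `w(H) = y(H) − u_y(H) = (H x + n) − (H ux + un)`. -/
def wVec {M N : ℕ} (ux : Fin N → ℝ) (un : Fin M → ℝ)
    (H : Matrix (Fin M) (Fin N) ℝ) (x : Fin N → ℝ) (n : Fin M → ℝ) : Fin M → ℝ :=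
  (H *ᵥ x + n) - (H *ᵥ ux + un)

/-- The matrix `R(H) = Cyy⁻¹ w (x − ux)ᵀ + Cyy⁻¹ (I − w wᵀ Cyy⁻¹) H Cx`. -/
noncomputable def Rmat {M N : ℕ} (ux : Fin N → ℝ) (Cx : Matrix (Fin N) (Fin N) ℝ)
    (un : Fin M → ℝ) (Cn : Matrix (Fin M) (Fin M) ℝ)
    (H : Matrix (Fin M) (Fin N) ℝ) (x : Fin N → ℝ) (n : Fin M → ℝ) :
    Matrix (Fin M) (Fin N) ℝ :=
  vecMulVec ((Cyy Cx Cn H)⁻¹ *ᵥ wVec ux un H x n) (x - ux) +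
    (Cyy Cx Cn H)⁻¹ *
      (1 - vecMulVec (wVec ux un H x n) (wVec ux un H x n) * (Cyy Cx Cn H)⁻¹) * (H * Cx)

/-- The component-wise linear estimate along the sample path:
`u_{x|y}(H) = ux + Cx Hᵀ Cyy(H)⁻¹ w(H)`, evaluated at `y(H) = H x + n`. -/
noncomputable def uxyP {M N : ℕ} (ux : Fin N → ℝ) (Cx : Matrix (Fin N) (Fin N) ℝ)
    (un : Fin M → ℝ) (Cn : Matrix (Fin M) (Fin M) ℝ)
    (H : Matrix (Fin M) (Fin N) ℝ) (x : Fin N → ℝ) (n : Fin M → ℝ) : Fin N → ℝ :=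
  ux + (Cx * Hᵀ) *ᵥ (Cyy Cx Cn H)⁻¹ *ᵥ wVec ux un H x n

/-- The matrix `C^{klrs} = (Cyy^{kl})⁻¹ w^{kl} (u_{x|y}^{rs})ᵀ Cx^k Hᵀ (Cyy^{kl})⁻¹`, where the
first four arguments describe the `(k,l)` component and the next four the `(r,s)` component. -/
noncomputable def Cmat {M N : ℕ}
    (ux₁ : Fin N → ℝ) (Cx₁ : Matrix (Fin N) (Fin N) ℝ)
    (un₁ : Fin M → ℝ) (Cn₁ : Matrix (Fin M) (Fin M) ℝ)
    (ux₂ : Fin N → ℝ) (Cx₂ : Matrix (Fin N) (Fin N) ℝ)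
    (un₂ : Fin M → ℝ) (Cn₂ : Matrix (Fin M) (Fin M) ℝ)
    (H : Matrix (Fin M) (Fin N) ℝ) (x : Fin N → ℝ) (n : Fin M → ℝ) :
    Matrix (Fin M) (Fin M) ℝ :=
  vecMulVec ((Cyy Cx₁ Cn₁ H)⁻¹ *ᵥ wVec ux₁ un₁ H x n)
    ((Cx₁ * Hᵀ * (Cyy Cx₁ Cn₁ H)⁻¹)ᵀ *ᵥ uxyP ux₂ Cx₂ un₂ Cn₂ H x n)

/-- The matrix `D^{klrs} = (Cyy^{kl})⁻¹ w^{kl} (u_{x|y}^{rs})ᵀ Cx^k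
− (C^{klrs} + (C^{klrs})ᵀ) H Cx^k + (Cyy^{kl})⁻¹ H Cx^k u_{x|y}^{rs} (x − ux^k)ᵀ`. -/
noncomputable def Dmat {M N : ℕ}
    (ux₁ : Fin N → ℝ) (Cx₁ : Matrix (Fin N) (Fin N) ℝ)
    (un₁ : Fin M → ℝ) (Cn₁ : Matrix (Fin M) (Fin M) ℝ)
    (ux₂ : Fin N → ℝ) (Cx₂ : Matrix (Fin N) (Fin N) ℝ)
    (un₂ : Fin M → ℝ) (Cn₂ : Matrix (Fin M) (Fin M) ℝ)
    (H : Matrix (Fin M) (Fin N) ℝ) (x : Fin N → ℝ) (n : Fin M → ℝ) :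
    Matrix (Fin M) (Fin N) ℝ :=
  vecMulVec ((Cyy Cx₁ Cn₁ H)⁻¹ *ᵥ wVec ux₁ un₁ H x n)
      (Cx₁ᵀ *ᵥ uxyP ux₂ Cx₂ un₂ Cn₂ H x n)
    - (Cmat ux₁ Cx₁ un₁ Cn₁ ux₂ Cx₂ un₂ Cn₂ H x n +
        (Cmat ux₁ Cx₁ un₁ Cn₁ ux₂ Cx₂ un₂ Cn₂ H x n)ᵀ) * (H * Cx₁)
    + vecMulVec (((Cyy Cx₁ Cn₁ H)⁻¹ * H * Cx₁) *ᵥ uxyP ux₂ Cx₂ un₂ Cn₂ H x n) (x - ux₁)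



section AuxGrad

theorem vmv_transpose {M N : ℕ} (a : Fin M → ℝ) (b : Fin N → ℝ) :
    (vecMulVec a b)ᵀ = vecMulVec b a := by
  ext i j; simp [vecMulVec_apply, mul_comm]

theorem trace_vmv {M N : ℕ} (a : Fin M → ℝ) (b : Fin N → ℝ) (Δ : Matrix (Fin M) (Fin N) ℝ) :
    ((vecMulVec a b)ᵀ * Δ).trace = a ⬝ᵥ (Δ *ᵥ b) := by
  simp only [Matrix.trace, Matrix.diag, Matrix.mul_apply, vecMulVec_apply, transpose_apply,
    dotProduct, Matrix.mulVec, Finset.mul_sum]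
  rw [Finset.sum_comm]
  exact Finset.sum_congr rfl fun j _ => Finset.sum_congr rfl fun i _ => by ring

theorem vmv_mul {M p q : ℕ} (a : Fin M → ℝ) (b : Fin p → ℝ) (K : Matrix (Fin p) (Fin q) ℝ) :
    vecMulVec a b * K = vecMulVec a (Kᵀ *ᵥ b) := by
  ext i j
  simp only [Matrix.mul_apply, vecMulVec_apply, Matrix.mulVec, dotProduct, transpose_apply,
    Finset.mul_sum]
  exact Finset.sum_congr rfl fun k _ => by ring

theorem mulVec_dot {M N : ℕ} (P : Matrix (Fin M) (Fin N) ℝ) (s : Fin N → ℝ) (u : Fin M → ℝ) :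
    (P *ᵥ s) ⬝ᵥ u = s ⬝ᵥ (Pᵀ *ᵥ u) := by
  rw [dotProduct_comm, Matrix.dotProduct_mulVec, Matrix.mulVec_transpose, dotProduct_comm]

theorem grad_algebra {M N : ℕ} (A : Matrix (Fin M) (Fin M) ℝ) (hA : Aᵀ = A)
    (Cx : Matrix (Fin N) (Fin N) ℝ) (hCx : Cxᵀ = Cx) (H Δ : Matrix (Fin M) (Fin N) ℝ)
    (w : Fin M → ℝ) (u v : Fin N → ℝ) :
    ((Cx * Δᵀ) *ᵥ (A *ᵥ w)
      + (Cx * Hᵀ) *ᵥ ((-(A * (Δ * Cx * Hᵀ + H * Cx * Δᵀ) * A)) *ᵥ w + A *ᵥ (Δ *ᵥ v))) ⬝ᵥ u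
    = ((vecMulVec (A *ᵥ w) (Cxᵀ *ᵥ u)
        - (vecMulVec (A *ᵥ w) ((Cx * Hᵀ * A)ᵀ *ᵥ u)
            + (vecMulVec (A *ᵥ w) ((Cx * Hᵀ * A)ᵀ *ᵥ u))ᵀ) * (H * Cx)
        + vecMulVec ((A * H * Cx) *ᵥ u) v)ᵀ * Δ).trace := by
  rw [vmv_transpose (A *ᵥ w) ((Cx * Hᵀ * A)ᵀ *ᵥ u)]
  rw [Matrix.add_mul, vmv_mul, vmv_mul]
  simp only [Matrix.transpose_sub, Matrix.transpose_add, Matrix.sub_mul, Matrix.add_mul,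
    Matrix.trace_sub, Matrix.trace_add, trace_vmv]
  simp only [Matrix.neg_mulVec, Matrix.mul_add, Matrix.add_mul, Matrix.mulVec_add,
    Matrix.add_mulVec, Matrix.mulVec_mulVec, add_dotProduct, neg_dotProduct, mulVec_dot,
    Matrix.transpose_mul, Matrix.transpose_transpose, hA, hCx, Matrix.mul_assoc]
  have flip1 : v ⬝ᵥ (Δᵀ * (A * (H * Cx))) *ᵥ u = u ⬝ᵥ (Cx * (Hᵀ * (A * Δ))) *ᵥ v := by
    rw [dotProduct_comm, Matrix.dotProduct_mulVec, ← Matrix.mulVec_transpose]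
    simp only [Matrix.transpose_mul, Matrix.transpose_transpose, hA, hCx, Matrix.mul_assoc]
  have flip2 : w ⬝ᵥ (A * (H * (Cx * (Δᵀ * (A * (H * Cx)))))) *ᵥ u
      = u ⬝ᵥ (Cx * (Hᵀ * (A * (Δ * (Cx * (Hᵀ * A)))))) *ᵥ w := by
    rw [dotProduct_comm, Matrix.dotProduct_mulVec, ← Matrix.mulVec_transpose]
    simp only [Matrix.transpose_mul, Matrix.transpose_transpose, hA, hCx, Matrix.mul_assoc]
  rw [flip1, flip2]
  ring


namespace MyGradAux
variable {m n p q : ℕ}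

noncomputable def transposeCLM : Matrix (Fin m) (Fin n) ℝ →L[ℝ] Matrix (Fin n) (Fin m) ℝ :=
  LinearMap.toContinuousLinearMap
    { toFun := fun B => Bᵀ, map_add' := fun _ _ => Matrix.transpose_add _ _,
      map_smul' := fun _ _ => Matrix.transpose_smul _ _ }
@[simp] lemma transposeCLM_apply (B : Matrix (Fin m) (Fin n) ℝ) : transposeCLM B = Bᵀ := rfl

noncomputable def rightMulCLM (Q : Matrix (Fin p) (Fin q) ℝ) :
    Matrix (Fin m) (Fin p) ℝ →L[ℝ] Matrix (Fin m) (Fin q) ℝ :=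
  LinearMap.toContinuousLinearMap
    { toFun := fun X => X * Q, map_add' := fun _ _ => Matrix.add_mul _ _ _,
      map_smul' := fun _ _ => Matrix.smul_mul _ _ _ }
@[simp] lemma rightMulCLM_apply (Q : Matrix (Fin p) (Fin q) ℝ) (X : Matrix (Fin m) (Fin p) ℝ) :
    rightMulCLM Q X = X * Q := rfl

noncomputable def mulVecCLM (v : Fin n → ℝ) :
    Matrix (Fin m) (Fin n) ℝ →L[ℝ] (Fin m → ℝ) :=
  LinearMap.toContinuousLinearMap
    { toFun := fun H => H *ᵥ v, map_add' := fun _ _ => Matrix.add_mulVec _ _ _,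
      map_smul' := fun c H => Matrix.smul_mulVec c H v }
@[simp] lemma mulVecCLM_apply (v : Fin n → ℝ) (H : Matrix (Fin m) (Fin n) ℝ) :
    mulVecCLM v H = H *ᵥ v := rfl

def matMulL : Matrix (Fin m) (Fin p) ℝ →ₗ[ℝ] Matrix (Fin p) (Fin q) ℝ →ₗ[ℝ]
    Matrix (Fin m) (Fin q) ℝ :=
  LinearMap.mk₂ ℝ (· * ·) Matrix.add_mul Matrix.smul_mul Matrix.mul_add (fun c X Y => Matrix.mul_smul X c Y)
@[simp] lemma matMulL_apply (X : Matrix (Fin m) (Fin p) ℝ) (Y : Matrix (Fin p) (Fin q) ℝ) :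
    matMulL X Y = X * Y := rfl

def mulVecL : Matrix (Fin m) (Fin n) ℝ →ₗ[ℝ] (Fin n → ℝ) →ₗ[ℝ] (Fin m → ℝ) :=
  LinearMap.mk₂ ℝ Matrix.mulVec Matrix.add_mulVec Matrix.smul_mulVec
    Matrix.mulVec_add (fun c X v => Matrix.mulVec_smul X c v)
@[simp] lemma mulVecL_apply (X : Matrix (Fin m) (Fin n) ℝ) (v : Fin n → ℝ) :
    mulVecL X v = X *ᵥ v := rfl

def dotL : (Fin n → ℝ) →ₗ[ℝ] (Fin n → ℝ) →ₗ[ℝ] ℝ :=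
  LinearMap.mk₂ ℝ dotProduct add_dotProduct smul_dotProduct
    dotProduct_add dotProduct_smul
@[simp] lemma dotL_apply (u v : Fin n → ℝ) : dotL u v = u ⬝ᵥ v := rfl

theorem conjT_eq_transpose {A : Matrix (Fin m) (Fin n) ℝ} : Aᴴ = Aᵀ := by
  ext i j; simp [Matrix.conjTranspose_apply]

theorem cyy_posDef {Cx : Matrix (Fin n) (Fin n) ℝ} {Cn : Matrix (Fin m) (Fin m) ℝ}
    (hCx : Cx.PosSemidef) (hCn : Cn.PosDef) (H : Matrix (Fin m) (Fin n) ℝ) :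
    (Cyy Cx Cn H).PosDef := by
  have h1 : (H * Cx * Hᵀ).PosSemidef := by
    have := hCx.mul_mul_conjTranspose_same H
    rwa [conjT_eq_transpose] at this
  exact Matrix.PosDef.posSemidef_add h1 hCn

theorem cyy_symm {Cx : Matrix (Fin n) (Fin n) ℝ} {Cn : Matrix (Fin m) (Fin m) ℝ}
    (hCx : Cx.PosSemidef) (hCn : Cn.PosDef) (H : Matrix (Fin m) (Fin n) ℝ) :
    (Cyy Cx Cn H)ᵀ = Cyy Cx Cn H := by
  have hx : Cxᵀ = Cx := by rw [← conjT_eq_transpose]; exact hCx.isHermitian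
  have hn : Cnᵀ = Cn := by rw [← conjT_eq_transpose]; exact hCn.isHermitian
  simp [Cyy, Matrix.transpose_add, Matrix.transpose_mul, hx, hn, Matrix.mul_assoc]

theorem cyyinv_symm {Cx : Matrix (Fin n) (Fin n) ℝ} {Cn : Matrix (Fin m) (Fin m) ℝ}
    (hCx : Cx.PosSemidef) (hCn : Cn.PosDef) (H : Matrix (Fin m) (Fin n) ℝ) :
    ((Cyy Cx Cn H)⁻¹)ᵀ = (Cyy Cx Cn H)⁻¹ := by
  rw [Matrix.transpose_nonsing_inv, cyy_symm hCx hCn]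


noncomputable def entryCLM (i : Fin m) (j : Fin n) : Matrix (Fin m) (Fin n) ℝ →L[ℝ] ℝ :=
  LinearMap.toContinuousLinearMap
    { toFun := fun B => B i j, map_add' := fun _ _ => rfl, map_smul' := fun _ _ => rfl }

theorem differentiable_det :
    Differentiable ℝ (fun B : Matrix (Fin m) (Fin m) ℝ => B.det) := by
  simp only [Matrix.det_apply']
  apply Differentiable.fun_sum
  intro σ _
  apply Differentiable.const_mul
  intro B
  exact (HasFDerivAt.finset_prod (u := Finset.univ)
    (g := fun i (B : Matrix (Fin m) (Fin m) ℝ) => B (σ i) i)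
    (fun i _ => (entryCLM (σ i) i).hasFDerivAt)).differentiableAt

noncomputable def matPiEquiv (m n : ℕ) : Matrix (Fin m) (Fin n) ℝ ≃L[ℝ] (Fin m → Fin n → ℝ) :=
  LinearEquiv.toContinuousLinearEquiv
    { toFun := fun B => B, invFun := fun B => B, map_add' := fun _ _ => rfl,
      map_smul' := fun _ _ => rfl, left_inv := fun _ => rfl, right_inv := fun _ => rfl }

theorem differentiable_matrix_of_entries {E : Type*} [NormedAddCommGroup E] [NormedSpace ℝ E]
    {f : E → Matrix (Fin m) (Fin n) ℝ}
    (h : ∀ i j, Differentiable ℝ (fun x => f x i j)) : Differentiable ℝ f := by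
  have h2 : Differentiable ℝ (fun x => (matPiEquiv m n) (f x)) := by
    intro x
    rw [differentiableAt_pi]; intro i
    rw [differentiableAt_pi]; intro j
    exact (h i j).differentiableAt
  exact (matPiEquiv m n).comp_differentiable_iff.mp h2

noncomputable def rowKillCLM (j : Fin m) :
    Matrix (Fin m) (Fin n) ℝ →L[ℝ] Matrix (Fin m) (Fin n) ℝ :=
  LinearMap.toContinuousLinearMap
    { toFun := fun B => B.updateRow j 0
      map_add' := by
        intro B C; ext i k
        by_cases h : i = j <;> simp [Matrix.updateRow_apply, h]
      map_smul' := by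
        intro c B; ext i k
        by_cases h : i = j <;> simp [Matrix.updateRow_apply, h] }

theorem updateRow_affine (j : Fin m) (v : Fin n → ℝ) (B : Matrix (Fin m) (Fin n) ℝ) :
    B.updateRow j v = rowKillCLM j B + (0 : Matrix (Fin m) (Fin n) ℝ).updateRow j v := by
  ext i k
  by_cases h : i = j <;> simp [rowKillCLM, Matrix.updateRow_apply, h]

theorem differentiable_adjugate :
    Differentiable ℝ (fun B : Matrix (Fin m) (Fin m) ℝ => B.adjugate) := by
  apply differentiable_matrix_of_entries
  intro i j
  simp only [Matrix.adjugate_apply]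
  have h1 : (fun B : Matrix (Fin m) (Fin m) ℝ => (B.updateRow j (Pi.single i 1)).det)
      = (fun B : Matrix (Fin m) (Fin m) ℝ => B.det) ∘
        (fun B : Matrix (Fin m) (Fin m) ℝ =>
          rowKillCLM j B + (0 : Matrix (Fin m) (Fin m) ℝ).updateRow j (Pi.single i 1)) := by
    funext B
    simp [Function.comp, ← updateRow_affine]
  rw [h1]
  exact differentiable_det.comp ((rowKillCLM j).differentiable.add_const _)

theorem hasFDerivAt_bilin {E F G W : Type*}
    [NormedAddCommGroup E] [NormedSpace ℝ E]
    [NormedAddCommGroup F] [NormedSpace ℝ F] [FiniteDimensional ℝ F]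
    [NormedAddCommGroup G] [NormedSpace ℝ G] [FiniteDimensional ℝ G]
    [NormedAddCommGroup W] [NormedSpace ℝ W]
    (b : F →ₗ[ℝ] G →ₗ[ℝ] W) {f : E → F} {g : E → G}
    {f' : E →L[ℝ] F} {g' : E →L[ℝ] G} {x : E}
    (hf : HasFDerivAt f f' x) (hg : HasFDerivAt g g' x) :
    ∃ D : E →L[ℝ] W, HasFDerivAt (fun y => b (f y) (g y)) D x ∧
      ∀ Δ, D Δ = b (f' Δ) (g x) + b (f x) (g' Δ) := by
  let B : F →L[ℝ] G →L[ℝ] W :=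
    LinearMap.toContinuousLinearMap
      { toFun := fun y => LinearMap.toContinuousLinearMap (b y)
        map_add' := by intro y z; ext w; simp
        map_smul' := by intro c y; ext w; simp }
  have hb : IsBoundedBilinearMap ℝ (fun p : F × G => B p.1 p.2) :=
    B.isBoundedBilinearMap
  have h2 := (hb.hasFDerivAt (f x, g x)).comp x (hf.prodMk hg)
  refine ⟨_, h2, fun Δ => ?_⟩
  have h3 : ((hb.deriv (f x, g x)).comp (f'.prod g')) Δ
      = B (f x) (g' Δ) + B (f' Δ) (g x) := by
    simp [IsBoundedBilinearMap.deriv_apply]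
  rw [h3, add_comm]
  rfl



theorem exists_hasFDerivAt_Cyy (Cx : Matrix (Fin n) (Fin n) ℝ) (Cn : Matrix (Fin m) (Fin m) ℝ)
    (H : Matrix (Fin m) (Fin n) ℝ) :
    ∃ C' : Matrix (Fin m) (Fin n) ℝ →L[ℝ] Matrix (Fin m) (Fin m) ℝ,
      HasFDerivAt (fun H' => Cyy Cx Cn H') C' H ∧
      ∀ Δ, C' Δ = Δ * Cx * Hᵀ + H * Cx * Δᵀ := by
  obtain ⟨D, hD, hDeq⟩ := hasFDerivAt_bilin (matMulL (m := m) (p := n) (q := m))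
    ((rightMulCLM Cx).hasFDerivAt (x := H)) (transposeCLM.hasFDerivAt (x := H))
  refine ⟨D, ?_, ?_⟩
  · have heq : (fun H' : Matrix (Fin m) (Fin n) ℝ => Cyy Cx Cn H')
        = fun H' => (matMulL (rightMulCLM Cx H') (transposeCLM H')) + Cn := by
      funext H'; simp [Cyy]
    rw [heq]
    exact hD.add_const Cn
  · intro Δ; refine (hDeq Δ).trans ?_; rfl

theorem exists_hasFDerivAt_inv {Cx : Matrix (Fin n) (Fin n) ℝ} {Cn : Matrix (Fin m) (Fin m) ℝ}
    (hCx : Cx.PosSemidef) (hCn : Cn.PosDef) (H : Matrix (Fin m) (Fin n) ℝ) :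
    ∃ A' : Matrix (Fin m) (Fin n) ℝ →L[ℝ] Matrix (Fin m) (Fin m) ℝ,
      HasFDerivAt (fun H' => (Cyy Cx Cn H')⁻¹) A' H ∧
      ∀ Δ, A' Δ = -((Cyy Cx Cn H)⁻¹ * (Δ * Cx * Hᵀ + H * Cx * Δᵀ) * (Cyy Cx Cn H)⁻¹) := by
  obtain ⟨C', hC', hC'eq⟩ := exists_hasFDerivAt_Cyy Cx Cn H
  have hdet : ∀ H' : Matrix (Fin m) (Fin n) ℝ, IsUnit (Cyy Cx Cn H').det :=
    fun H' => isUnit_iff_ne_zero.mpr (cyy_posDef hCx hCn H').det_pos.ne'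
  have hdiffC : DifferentiableAt ℝ (fun H' => Cyy Cx Cn H') H := hC'.differentiableAt
  have hinvdiff : DifferentiableAt ℝ (fun H' => (Cyy Cx Cn H')⁻¹) H := by
    have heq : (fun H' : Matrix (Fin m) (Fin n) ℝ => (Cyy Cx Cn H')⁻¹)
        = fun H' => ((Cyy Cx Cn H').det)⁻¹ • (Cyy Cx Cn H').adjugate := by
      funext H'
      rw [Matrix.inv_def, Ring.inverse_eq_inv']
    rw [heq]
    have h1 : DifferentiableAt ℝ (fun H' => ((Cyy Cx Cn H').det)) H :=
      (differentiable_det.differentiableAt).comp H hdiffC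
    have h2 : DifferentiableAt ℝ (fun H' => ((Cyy Cx Cn H').det)⁻¹) H :=
      h1.inv ((cyy_posDef hCx hCn H).det_pos.ne')
    have h3 : DifferentiableAt ℝ (fun H' => (Cyy Cx Cn H').adjugate) H :=
      (differentiable_adjugate.differentiableAt).comp H hdiffC
    exact h2.smul h3
  have hA : HasFDerivAt (fun H' => (Cyy Cx Cn H')⁻¹)
      (fderiv ℝ (fun H' => (Cyy Cx Cn H')⁻¹) H) H := hinvdiff.hasFDerivAt
  obtain ⟨D, hD, hDeq⟩ := hasFDerivAt_bilin (matMulL (m := m) (p := m) (q := m)) hA hC'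
  have hD0 : D = 0 := by
    have hone : (fun H' : Matrix (Fin m) (Fin n) ℝ =>
        matMulL ((Cyy Cx Cn H')⁻¹) (Cyy Cx Cn H')) = fun _ => (1 : Matrix (Fin m) (Fin m) ℝ) := by
      funext H'; simp [Matrix.nonsing_inv_mul _ (hdet H')]
    have h0 : HasFDerivAt (fun H' : Matrix (Fin m) (Fin n) ℝ =>
        matMulL ((Cyy Cx Cn H')⁻¹) (Cyy Cx Cn H'))
        (0 : Matrix (Fin m) (Fin n) ℝ →L[ℝ] Matrix (Fin m) (Fin m) ℝ) H := by
      rw [hone]; exact hasFDerivAt_const _ _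
    exact hD.unique h0
  refine ⟨_, hA, fun Δ => ?_⟩
  have h1 := hDeq Δ
  rw [hD0] at h1
  simp only [ContinuousLinearMap.zero_apply, matMulL_apply] at h1
  have h2 : fderiv ℝ (fun H' => (Cyy Cx Cn H')⁻¹) H Δ * Cyy Cx Cn H
      = -((Cyy Cx Cn H)⁻¹ * C' Δ) := eq_neg_of_add_eq_zero_left h1.symm
  calc fderiv ℝ (fun H' => (Cyy Cx Cn H')⁻¹) H Δ
      = fderiv ℝ (fun H' => (Cyy Cx Cn H')⁻¹) H Δ * (Cyy Cx Cn H * (Cyy Cx Cn H)⁻¹) := by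
        rw [Matrix.mul_nonsing_inv _ (hdet H), Matrix.mul_one]
    _ = (fderiv ℝ (fun H' => (Cyy Cx Cn H')⁻¹) H Δ * Cyy Cx Cn H) * (Cyy Cx Cn H)⁻¹ := by
        rw [Matrix.mul_assoc]
    _ = -((Cyy Cx Cn H)⁻¹ * C' Δ) * (Cyy Cx Cn H)⁻¹ := by rw [h2]
    _ = -((Cyy Cx Cn H)⁻¹ * (Δ * Cx * Hᵀ + H * Cx * Δᵀ) * (Cyy Cx Cn H)⁻¹) := by
        rw [hC'eq]; simp [Matrix.neg_mul]



noncomputable def leftMulCLM (P : Matrix (Fin p) (Fin q) ℝ) :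
    Matrix (Fin q) (Fin n) ℝ →L[ℝ] Matrix (Fin p) (Fin n) ℝ :=
  LinearMap.toContinuousLinearMap
    { toFun := fun X => P * X, map_add' := fun _ _ => Matrix.mul_add _ _ _,
      map_smul' := fun c X => Matrix.mul_smul _ _ _ }
@[simp] lemma leftMulCLM_apply (P : Matrix (Fin p) (Fin q) ℝ) (X : Matrix (Fin q) (Fin n) ℝ) :
    leftMulCLM P X = P * X := rfl

theorem exists_hasFDerivAt_uxyP {M N : ℕ} (ux : Fin N → ℝ) {Cx : Matrix (Fin N) (Fin N) ℝ}
    (un : Fin M → ℝ) {Cn : Matrix (Fin M) (Fin M) ℝ}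
    (hCx : Cx.PosSemidef) (hCn : Cn.PosDef)
    (x : Fin N → ℝ) (n : Fin M → ℝ) (H : Matrix (Fin M) (Fin N) ℝ) :
    ∃ U : Matrix (Fin M) (Fin N) ℝ →L[ℝ] (Fin N → ℝ),
      HasFDerivAt (fun H' => uxyP ux Cx un Cn H' x n) U H ∧
      ∀ Δ, U Δ = (Cx * Δᵀ) *ᵥ ((Cyy Cx Cn H)⁻¹ *ᵥ wVec ux un H x n)
        + (Cx * Hᵀ) *ᵥ
          ((-((Cyy Cx Cn H)⁻¹ * (Δ * Cx * Hᵀ + H * Cx * Δᵀ) * (Cyy Cx Cn H)⁻¹)) *ᵥ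
              wVec ux un H x n
            + (Cyy Cx Cn H)⁻¹ *ᵥ (Δ *ᵥ (x - ux))) := by
  obtain ⟨A', hA', hA'eq⟩ := exists_hasFDerivAt_inv hCx hCn H
  have hw : HasFDerivAt (fun H' => wVec ux un H' x n) (mulVecCLM (x - ux)) H := by
    have heq : (fun H' : Matrix (Fin M) (Fin N) ℝ => wVec ux un H' x n)
        = fun H' => mulVecCLM (m := M) (x - ux) H' + (n - un) := by
      funext H'
      simp only [wVec, mulVecCLM_apply, Matrix.mulVec_sub]
      abel
    rw [heq]
    exact (mulVecCLM (x - ux)).hasFDerivAt.add_const _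
  obtain ⟨D1, hD1, hD1eq⟩ := hasFDerivAt_bilin mulVecL hA' hw
  have h1 : HasFDerivAt (fun H' : Matrix (Fin M) (Fin N) ℝ => Cx * H'ᵀ)
      ((leftMulCLM Cx).comp transposeCLM) H :=
    ((leftMulCLM Cx).comp transposeCLM).hasFDerivAt
  obtain ⟨D2, hD2, hD2eq⟩ := hasFDerivAt_bilin mulVecL h1 hD1
  refine ⟨D2, ?_, ?_⟩
  · have heq : (fun H' : Matrix (Fin M) (Fin N) ℝ => uxyP ux Cx un Cn H' x n)
        = fun H' => ux + mulVecL (Cx * H'ᵀ)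
            (mulVecL ((Cyy Cx Cn H')⁻¹) (wVec ux un H' x n)) := by
      funext H'; simp [uxyP]
    rw [heq]
    exact hD2.const_add ux
  · intro Δ
    refine (hD2eq Δ).trans ?_
    rw [hD1eq]; erw [hA'eq]
    simp [Matrix.neg_mulVec]
    refine congrArg₂ (· + ·) rfl ?_
    rw [← Matrix.mulVec_mulVec (M := (Cyy Cx Cn H)⁻¹) (N := Δ)]
    rfl

end MyGradAux

end AuxGrad

/-- For fixed `x, n` and two mixture components `(k,l)` and `(r,s)`, the map
`H ↦ z^{klrs}(H) = (u_{x|y}^{kl}(y(H)))ᵀ u_{x|y}^{rs}(y(H))` is differentiable with gradient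
`D^{klrs}(H) + D^{rskl}(H)`. -/
theorem hasGradient_inner_product_of_component_estimates
    {M N : ℕ}
    (uxk : Fin N → ℝ) (Cxk : Matrix (Fin N) (Fin N) ℝ)
    (unl : Fin M → ℝ) (Cnl : Matrix (Fin M) (Fin M) ℝ)
    (uxr : Fin N → ℝ) (Cxr : Matrix (Fin N) (Fin N) ℝ)
    (uns : Fin M → ℝ) (Cns : Matrix (Fin M) (Fin M) ℝ)
    (hCxk : Cxk.PosSemidef) (hCnl : Cnl.PosDef)
    (hCxr : Cxr.PosSemidef) (hCns : Cns.PosDef)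
    (x : Fin N → ℝ) (n : Fin M → ℝ) (H : Matrix (Fin M) (Fin N) ℝ) :
    ∃ L : Matrix (Fin M) (Fin N) ℝ →L[ℝ] ℝ,
      HasFDerivAt
        (fun H' : Matrix (Fin M) (Fin N) ℝ =>
          uxyP uxk Cxk unl Cnl H' x n ⬝ᵥ uxyP uxr Cxr uns Cns H' x n) L H ∧
      ∀ Δ : Matrix (Fin M) (Fin N) ℝ,
        L Δ = ((Dmat uxk Cxk unl Cnl uxr Cxr uns Cns H x n +
            Dmat uxr Cxr uns Cns uxk Cxk unl Cnl H x n)ᵀ * Δ).trace := by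
  classical
  obtain ⟨U₁, hU₁, hU₁eq⟩ := MyGradAux.exists_hasFDerivAt_uxyP uxk unl hCxk hCnl x n H
  obtain ⟨U₂, hU₂, hU₂eq⟩ := MyGradAux.exists_hasFDerivAt_uxyP uxr uns hCxr hCns x n H
  obtain ⟨L, hL, hLeq⟩ := MyGradAux.hasFDerivAt_bilin MyGradAux.dotL hU₁ hU₂
  have hA1 : ((Cyy Cxk Cnl H)⁻¹)ᵀ = (Cyy Cxk Cnl H)⁻¹ := MyGradAux.cyyinv_symm hCxk hCnl H
  have hA2 : ((Cyy Cxr Cns H)⁻¹)ᵀ = (Cyy Cxr Cns H)⁻¹ := MyGradAux.cyyinv_symm hCxr hCns H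
  have hCx1 : Cxkᵀ = Cxk := by rw [← MyGradAux.conjT_eq_transpose]; exact hCxk.isHermitian
  have hCx2 : Cxrᵀ = Cxr := by rw [← MyGradAux.conjT_eq_transpose]; exact hCxr.isHermitian
  refine ⟨L, hL, fun Δ => ?_⟩
  refine (hLeq Δ).trans ?_
  simp only [MyGradAux.dotL_apply]
  erw [hU₁eq, hU₂eq]
  rw [dotProduct_comm (uxyP uxk Cxk unl Cnl H x n)]
  rw [Matrix.transpose_add, Matrix.add_mul, Matrix.trace_add]
  rw [grad_algebra _ hA1 _ hCx1 H Δ (wVec uxk unl H x n) (uxyP uxr Cxr uns Cns H x n) (x - uxk)]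
  rw [grad_algebra _ hA2 _ hCx2 H Δ (wVec uxr uns H x n) (uxyP uxk Cxk unl Cnl H x n) (x - uxr)]
  simp only [Dmat, Cmat]
end

section
/- Fix x ∈ ℝ^N and n ∈ ℝ^M, and for an M×N real matrix H write y(H) = Hx + n. Then the mixture density along the sample path, H ↦ f(y(H)) = Σ_{k∈K, l∈L} p_k q_l f^{kl}(y(H)), is differentiable with gradient −Σ_{k∈K, l∈L} p_k q_l f^{kl}(y(H)) R^{kl}(H), where w^{kl} = y(H) − u_y^{kl}(H) and R^{kl}(H) = (C_yy^{kl})^{−1} w^{kl} (x − u_x^k)ᵀ + (C_yy^{kl})^{−1}(I_M − w^{kl}(w^{kl})ᵀ (C_yy^{kl})^{−1}) H C_x^k. -/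
open Matrix MeasureTheory ProbabilityTheory
open scoped NNReal ENNReal Classical

attribute [local instance] Matrix.normedAddCommGroup Matrix.normedSpace

/-- Component Gaussian density along the sample path: `f^{kl}(y(H))` with `y(H) = H x + n`. -/
noncomputable def fComp {M N : ℕ} (ux : Fin N → ℝ) (Cx : Matrix (Fin N) (Fin N) ℝ)
    (un : Fin M → ℝ) (Cn : Matrix (Fin M) (Fin M) ℝ)
    (H : Matrix (Fin M) (Fin N) ℝ) (x : Fin N → ℝ) (n : Fin M → ℝ) : ℝ :=
  gaussianPdf (H *ᵥ ux + un) (Cyy Cx Cn H) (H *ᵥ x + n)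

/-- The mixture density along the sample path: `f(y(H)) = ∑ k l, p k q l f^{kl}(y(H))`. -/
noncomputable def mixDen {M N : ℕ} {K L : Type*} [Fintype K] [Fintype L]
    (p : K → ℝ≥0) (q : L → ℝ≥0)
    (ux : K → Fin N → ℝ) (Cx : K → Matrix (Fin N) (Fin N) ℝ)
    (un : L → Fin M → ℝ) (Cn : L → Matrix (Fin M) (Fin M) ℝ)
    (H : Matrix (Fin M) (Fin N) ℝ) (x : Fin N → ℝ) (n : Fin M → ℝ) : ℝ :=
  ∑ k, ∑ l, (p k : ℝ) * (q l : ℝ) * fComp (ux k) (Cx k) (un l) (Cn l) H x n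

/-- The MMSE estimate along the sample path:
`u_{x|y}(y(H)) = (∑ k l, p k q l f^{kl} u_{x|y}^{kl}) / (∑ k l, p k q l f^{kl})`. -/
noncomputable def uxyMix {M N : ℕ} {K L : Type*} [Fintype K] [Fintype L]
    (p : K → ℝ≥0) (q : L → ℝ≥0)
    (ux : K → Fin N → ℝ) (Cx : K → Matrix (Fin N) (Fin N) ℝ)
    (un : L → Fin M → ℝ) (Cn : L → Matrix (Fin M) (Fin M) ℝ)
    (H : Matrix (Fin M) (Fin N) ℝ) (x : Fin N → ℝ) (n : Fin M → ℝ) : Fin N → ℝ :=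
  (mixDen p q ux Cx un Cn H x n)⁻¹ •
    ∑ k, ∑ l, ((p k : ℝ) * (q l : ℝ) * fComp (ux k) (Cx k) (un l) (Cn l) H x n) •
      uxyP (ux k) (Cx k) (un l) (Cn l) H x n

/-- `Ğ(H, x, n) = ‖u_{x|y}(y(H))‖₂²`, the squared Euclidean norm of the MMSE estimate. -/
noncomputable def Gbreve {M N : ℕ} {K L : Type*} [Fintype K] [Fintype L]
    (p : K → ℝ≥0) (q : L → ℝ≥0)
    (ux : K → Fin N → ℝ) (Cx : K → Matrix (Fin N) (Fin N) ℝ)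
    (un : L → Fin M → ℝ) (Cn : L → Matrix (Fin M) (Fin M) ℝ)
    (H : Matrix (Fin M) (Fin N) ℝ) (x : Fin N → ℝ) (n : Fin M → ℝ) : ℝ :=
  uxyMix p q ux Cx un Cn H x n ⬝ᵥ uxyMix p q ux Cx un Cn H x n

/-- `h^{klrs} = p k q l p r q s f^{kl}(y) f^{rs}(y)`. -/
noncomputable def hCoef {M N : ℕ} {K L : Type*} [Fintype K] [Fintype L]
    (p : K → ℝ≥0) (q : L → ℝ≥0)
    (ux : K → Fin N → ℝ) (Cx : K → Matrix (Fin N) (Fin N) ℝ)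
    (un : L → Fin M → ℝ) (Cn : L → Matrix (Fin M) (Fin M) ℝ)
    (H : Matrix (Fin M) (Fin N) ℝ) (x : Fin N → ℝ) (n : Fin M → ℝ)
    (k : K) (l : L) (r : K) (s : L) : ℝ :=
  (p k : ℝ) * (q l : ℝ) * (p r : ℝ) * (q s : ℝ) *
    fComp (ux k) (Cx k) (un l) (Cn l) H x n * fComp (ux r) (Cx r) (un s) (Cn s) H x n

/-- `z^{klrs} = (u_{x|y}^{kl})ᵀ u_{x|y}^{rs}` along the sample path. -/
noncomputable def zCoef {M N : ℕ} {K L : Type*}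
    (ux : K → Fin N → ℝ) (Cx : K → Matrix (Fin N) (Fin N) ℝ)
    (un : L → Fin M → ℝ) (Cn : L → Matrix (Fin M) (Fin M) ℝ)
    (H : Matrix (Fin M) (Fin N) ℝ) (x : Fin N → ℝ) (n : Fin M → ℝ)
    (k : K) (l : L) (r : K) (s : L) : ℝ :=
  uxyP (ux k) (Cx k) (un l) (Cn l) H x n ⬝ᵥ uxyP (ux r) (Cx r) (un s) (Cn s) H x n

/-- The matrix `w_{klrs} = −(R^{kl} + R^{rs}) z^{klrs} + (D^{klrs} + D^{rskl})
+ 2 z^{klrs} (∑ k' l', p k' q l' f^{k'l'} R^{k'l'}) / (∑ k' l', p k' q l' f^{k'l'})`. -/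
noncomputable def wMat {M N : ℕ} {K L : Type*} [Fintype K] [Fintype L]
    (p : K → ℝ≥0) (q : L → ℝ≥0)
    (ux : K → Fin N → ℝ) (Cx : K → Matrix (Fin N) (Fin N) ℝ)
    (un : L → Fin M → ℝ) (Cn : L → Matrix (Fin M) (Fin M) ℝ)
    (H : Matrix (Fin M) (Fin N) ℝ) (x : Fin N → ℝ) (n : Fin M → ℝ)
    (k : K) (l : L) (r : K) (s : L) : Matrix (Fin M) (Fin N) ℝ :=
  (-(zCoef ux Cx un Cn H x n k l r s)) •
      (Rmat (ux k) (Cx k) (un l) (Cn l) H x n + Rmat (ux r) (Cx r) (un s) (Cn s) H x n)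
    + (Dmat (ux k) (Cx k) (un l) (Cn l) (ux r) (Cx r) (un s) (Cn s) H x n +
        Dmat (ux r) (Cx r) (un s) (Cn s) (ux k) (Cx k) (un l) (Cn l) H x n)
    + (2 * zCoef ux Cx un Cn H x n k l r s / mixDen p q ux Cx un Cn H x n) •
        ∑ k', ∑ l', ((p k' : ℝ) * (q l' : ℝ) * fComp (ux k') (Cx k') (un l') (Cn l') H x n) •
          Rmat (ux k') (Cx k') (un l') (Cn l') H x n

/-- The gradient of `Ğ` w.r.t. `H`: `(∑ klrs, h^{klrs} w_{klrs}) / (∑ klrs, h^{klrs})`. -/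
noncomputable def gradG {M N : ℕ} {K L : Type*} [Fintype K] [Fintype L]
    (p : K → ℝ≥0) (q : L → ℝ≥0)
    (ux : K → Fin N → ℝ) (Cx : K → Matrix (Fin N) (Fin N) ℝ)
    (un : L → Fin M → ℝ) (Cn : L → Matrix (Fin M) (Fin M) ℝ)
    (H : Matrix (Fin M) (Fin N) ℝ) (x : Fin N → ℝ) (n : Fin M → ℝ) :
    Matrix (Fin M) (Fin N) ℝ :=
  (∑ k, ∑ l, ∑ r, ∑ s, hCoef p q ux Cx un Cn H x n k l r s)⁻¹ •
    ∑ k, ∑ l, ∑ r, ∑ s, hCoef p q ux Cx un Cn H x n k l r s • wMat p q ux Cx un Cn H x n k l r s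

section Aux

variable {E : Type*} [NormedAddCommGroup E] [NormedSpace ℝ E]

/-- entrywise differentiable ⇒ det differentiable -/
lemma differentiableAt_det {m : ℕ} {A : E → Matrix (Fin m) (Fin m) ℝ} {x₀ : E}
    (h : ∀ i j, DifferentiableAt ℝ (fun e => A e i j) x₀) :
    DifferentiableAt ℝ (fun e => (A e).det) x₀ := by
  simp only [Matrix.det_apply']
  refine DifferentiableAt.fun_sum fun σ _ => DifferentiableAt.const_mul ?_ _
  exact (HasFDerivAt.finset_prod (fun i _ => (h (σ i) i).hasFDerivAt)).differentiableAt

lemma differentiableAt_adjugate {m : ℕ} {A : E → Matrix (Fin m) (Fin m) ℝ} {x₀ : E}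
    (h : ∀ i j, DifferentiableAt ℝ (fun e => A e i j) x₀) (i j : Fin m) :
    DifferentiableAt ℝ (fun e => (A e).adjugate i j) x₀ := by
  simp only [Matrix.adjugate_apply]
  apply differentiableAt_det
  intro r c
  by_cases hr : r = j
  · simp [hr, Matrix.updateRow_apply]
  · simp only [Matrix.updateRow_apply, hr, if_false]
    exact h r c

/-- Jacobi's formula, one-variable version. -/
lemma hasDerivAt_det {m : ℕ} {A : ℝ → Matrix (Fin m) (Fin m) ℝ}
    {A' : Matrix (Fin m) (Fin m) ℝ} {t₀ : ℝ}
    (h : ∀ i j, HasDerivAt (fun t => A t i j) (A' i j) t₀) :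
    HasDerivAt (fun t => (A t).det) (((A t₀).adjugate * A').trace) t₀ := by
  have h1 : HasDerivAt (fun t => (A t).det)
      (∑ σ : Equiv.Perm (Fin m), ((Equiv.Perm.sign σ : ℤ) : ℝ) *
        (∑ i, (∏ j ∈ Finset.univ.erase i, A t₀ (σ j) j) • A' (σ i) i)) t₀ := by
    simp only [Matrix.det_apply']
    exact HasDerivAt.fun_sum fun σ _ =>
      HasDerivAt.const_mul _ (HasDerivAt.fun_finsetProd fun i _ => h (σ i) i)
  convert h1 using 1
  calc ((A t₀).adjugate * A').trace
      = ∑ i, ((A t₀).adjugate *ᵥ fun r => A' r i) i := by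
        simp [Matrix.trace, Matrix.diag, Matrix.mul_apply, Matrix.mulVec, dotProduct]
    _ = ∑ i, Matrix.cramer (A t₀) (fun r => A' r i) i := by
        simp [Matrix.cramer_eq_adjugate_mulVec]
    _ = ∑ i, ∑ σ : Equiv.Perm (Fin m), ((Equiv.Perm.sign σ : ℤ) : ℝ) *
          ∏ j, ((A t₀).updateCol i fun r => A' r i) (σ j) j := by
        simp [Matrix.cramer_apply, Matrix.det_apply']
    _ = ∑ i, ∑ σ : Equiv.Perm (Fin m), ((Equiv.Perm.sign σ : ℤ) : ℝ) *
          (A' (σ i) i * ∏ j ∈ Finset.univ.erase i, A t₀ (σ j) j) := by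
        refine Finset.sum_congr rfl fun i _ => Finset.sum_congr rfl fun σ _ => ?_
        congr 1
        rw [← Finset.mul_prod_erase Finset.univ _ (Finset.mem_univ i)]
        congr 1
        · simp [Matrix.updateCol_apply]
        · refine Finset.prod_congr rfl fun j hj => ?_
          simp [Matrix.updateCol_apply, (Finset.ne_of_mem_erase hj)]
    _ = ∑ σ : Equiv.Perm (Fin m), ((Equiv.Perm.sign σ : ℤ) : ℝ) *
          (∑ i, (∏ j ∈ Finset.univ.erase i, A t₀ (σ j) j) • A' (σ i) i) := by
        rw [Finset.sum_comm]
        refine Finset.sum_congr rfl fun σ _ => ?_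
        rw [Finset.mul_sum]
        refine Finset.sum_congr rfl fun i _ => ?_
        simp [smul_eq_mul]; ring

/-- Derivative of the matrix inverse, entrywise, one-variable version. -/
lemma hasDerivAt_inv_entry {m : ℕ} {A : ℝ → Matrix (Fin m) (Fin m) ℝ}
    {A' : Matrix (Fin m) (Fin m) ℝ} {t₀ : ℝ}
    (h : ∀ i j, HasDerivAt (fun t => A t i j) (A' i j) t₀)
    (hdet : (A t₀).det ≠ 0) (i j : Fin m) :
    HasDerivAt (fun t => (A t)⁻¹ i j) ((-((A t₀)⁻¹ * A' * (A t₀)⁻¹)) i j) t₀ := by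
  have hde : ∀ i j, DifferentiableAt ℝ (fun t => A t i j) t₀ := fun i j => (h i j).differentiableAt
  have hinv_eq : ∀ t, ∀ i j : Fin m, (A t)⁻¹ i j = ((A t).det)⁻¹ * (A t).adjugate i j := by
    intro t i j
    rw [Matrix.inv_def, Ring.inverse_eq_inv']
    simp [Matrix.smul_apply, smul_eq_mul]
  have hdiff : ∀ i j : Fin m, DifferentiableAt ℝ (fun t => (A t)⁻¹ i j) t₀ := by
    intro i j
    have : (fun t => (A t)⁻¹ i j) = fun t => ((A t).det)⁻¹ * (A t).adjugate i j :=
      funext fun t => hinv_eq t i j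
    rw [this]
    exact ((differentiableAt_det hde).inv hdet).mul (differentiableAt_adjugate hde i j)
  set G : Matrix (Fin m) (Fin m) ℝ := (A t₀)⁻¹ with hG
  set G' : Matrix (Fin m) (Fin m) ℝ := Matrix.of fun i j => deriv (fun t => (A t)⁻¹ i j) t₀
    with hG'def
  have hG' : ∀ i j : Fin m, HasDerivAt (fun t => (A t)⁻¹ i j) (G' i j) t₀ := fun i j =>
    (hdiff i j).hasDerivAt
  have hdetc : ContinuousAt (fun t => (A t).det) t₀ := (differentiableAt_det hde).continuousAt
  have hev : ∀ᶠ t in nhds t₀, (A t).det ≠ 0 := hdetc.eventually_ne hdet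
  have hmat : A' * G + A t₀ * G' = 0 := by
    ext i j
    have hprod : HasDerivAt (fun t => ∑ k, A t i k * (A t)⁻¹ k j)
        (∑ k, (A' i k * G k j + A t₀ i k * G' k j)) t₀ :=
      HasDerivAt.fun_sum fun k _ => (h i k).mul (hG' k j)
    have hconst : HasDerivAt (fun t => ∑ k, A t i k * (A t)⁻¹ k j) 0 t₀ := by
      have : (fun t => ∑ k, A t i k * (A t)⁻¹ k j) =ᶠ[nhds t₀]
          fun _ => (1 : Matrix (Fin m) (Fin m) ℝ) i j := by
        filter_upwards [hev] with t ht
        have := Matrix.mul_nonsing_inv (A t) (isUnit_iff_ne_zero.mpr ht)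
        calc ∑ k, A t i k * (A t)⁻¹ k j = (A t * (A t)⁻¹) i j := by
              simp [Matrix.mul_apply]
          _ = (1 : Matrix (Fin m) (Fin m) ℝ) i j := by rw [this]
      exact (hasDerivAt_const t₀ _).congr_of_eventuallyEq this
    have h0 : ∑ k, (A' i k * G k j + A t₀ i k * G' k j) = 0 := hprod.unique hconst
    simpa [Matrix.add_apply, Matrix.mul_apply, Finset.sum_add_distrib] using h0
  have hGA : G * A t₀ = 1 := Matrix.nonsing_inv_mul (A t₀) (isUnit_iff_ne_zero.mpr hdet)
  have : G' = -(G * A' * G) := by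
    have h1 : A t₀ * G' = -(A' * G) := eq_neg_of_add_eq_zero_right hmat
    calc G' = (G * A t₀) * G' := by rw [hGA, one_mul]
      _ = G * (A t₀ * G') := by rw [Matrix.mul_assoc]
      _ = G * (-(A' * G)) := by rw [h1]
      _ = -(G * A' * G) := by rw [Matrix.mul_neg, Matrix.mul_assoc]
  rw [← this]
  exact hG' i j

/-- Derivative of a quadratic form with varying matrix and vector. -/
lemma hasDerivAt_quadForm {m : ℕ} {u : ℝ → Fin m → ℝ} {u' : Fin m → ℝ}
    {B : ℝ → Matrix (Fin m) (Fin m) ℝ} {B' : Matrix (Fin m) (Fin m) ℝ} {t₀ : ℝ}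
    (hu : ∀ i, HasDerivAt (fun t => u t i) (u' i) t₀)
    (hB : ∀ i j, HasDerivAt (fun t => B t i j) (B' i j) t₀) :
    HasDerivAt (fun t => u t ⬝ᵥ B t *ᵥ u t)
      (u' ⬝ᵥ B t₀ *ᵥ u t₀ + u t₀ ⬝ᵥ B' *ᵥ u t₀ + u t₀ ⬝ᵥ B t₀ *ᵥ u' ) t₀ := by
  have h1 : HasDerivAt (fun t => ∑ i, u t i * ∑ j, B t i j * u t j)
      (∑ i, (u' i * ∑ j, B t₀ i j * u t₀ j +
        u t₀ i * ∑ j, (B' i j * u t₀ j + B t₀ i j * u' j))) t₀ :=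
    HasDerivAt.fun_sum fun i _ => (hu i).mul (HasDerivAt.fun_sum fun j _ => (hB i j).mul (hu j))
  have h2 : (fun t => u t ⬝ᵥ B t *ᵥ u t) = fun t => ∑ i, u t i * ∑ j, B t i j * u t j := by
    funext t; simp [dotProduct, Matrix.mulVec]
  rw [h2]
  convert h1 using 1
  simp only [dotProduct, Matrix.mulVec]
  rw [← Finset.sum_add_distrib, ← Finset.sum_add_distrib]
  refine Finset.sum_congr rfl fun i _ => ?_
  rw [Finset.sum_add_distrib, mul_add]
  ring

lemma trace_transpose_vecMulVec_mul {M N : ℕ} (a : Fin M → ℝ) (v : Fin N → ℝ)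
    (Δ : Matrix (Fin M) (Fin N) ℝ) :
    ((Matrix.vecMulVec a v)ᵀ * Δ).trace = a ⬝ᵥ (Δ *ᵥ v) := by
  simp only [Matrix.trace, Matrix.diag, Matrix.mul_apply, Matrix.transpose_apply,
    Matrix.vecMulVec_apply, dotProduct, Matrix.mulVec]
  rw [Finset.sum_comm]
  exact Finset.sum_congr rfl fun i _ => by rw [Finset.mul_sum]; exact Finset.sum_congr rfl fun j _ => by ring

lemma mul_vecMulVec {m k : ℕ} (M : Matrix (Fin m) (Fin m) ℝ) (a : Fin m → ℝ) (b : Fin k → ℝ) :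
    M * Matrix.vecMulVec a b = Matrix.vecMulVec (M *ᵥ a) b := by
  ext i j
  simp only [Matrix.mul_apply, Matrix.vecMulVec_apply, Matrix.mulVec, dotProduct]
  rw [Finset.sum_mul]
  exact Finset.sum_congr rfl fun l _ => by ring

lemma vecMulVec_mul {m k : ℕ} (a : Fin m → ℝ) (b : Fin m → ℝ) (M : Matrix (Fin m) (Fin k) ℝ) :
    Matrix.vecMulVec a b * M = Matrix.vecMulVec a (Mᵀ *ᵥ b) := by
  ext i j
  simp only [Matrix.mul_apply, Matrix.vecMulVec_apply, Matrix.mulVec, dotProduct,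
    Matrix.transpose_apply]
  rw [Finset.mul_sum]
  exact Finset.sum_congr rfl fun l _ => by ring

lemma hasDerivAt_Cyy_entry {M N : ℕ} (Cx : Matrix (Fin N) (Fin N) ℝ)
    (Cn : Matrix (Fin M) (Fin M) ℝ) (H Δ : Matrix (Fin M) (Fin N) ℝ) (i j : Fin M) :
    HasDerivAt (fun t : ℝ => Cyy Cx Cn (H + t • Δ) i j)
      ((Δ * Cx * Hᵀ + H * Cx * Δᵀ) i j) 0 := by
  have hentry : ∀ t : ℝ, Cyy Cx Cn (H + t • Δ) i j =
      ∑ b, (∑ a, (H i a + t * Δ i a) * Cx a b) * (H j b + t * Δ j b) + Cn i j := by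
    intro t
    simp [Cyy, Matrix.mul_apply, Matrix.add_apply, Matrix.smul_apply, smul_eq_mul,
      Matrix.transpose_apply]
  have key : HasDerivAt
      (fun t : ℝ => ∑ b, (∑ a, (H i a + t * Δ i a) * Cx a b) * (H j b + t * Δ j b) + Cn i j)
      (∑ b, ((∑ a, Δ i a * Cx a b) * (H j b + 0 * Δ j b) +
        (∑ a, (H i a + 0 * Δ i a) * Cx a b) * Δ j b)) 0 := by
    refine HasDerivAt.add_const _ ?_
    refine HasDerivAt.fun_sum fun b _ => ?_
    refine HasDerivAt.mul ?_ ?_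
    · refine HasDerivAt.fun_sum fun a _ => ?_
      simpa using (((hasDerivAt_id (0:ℝ)).mul_const (Δ i a)).const_add (H i a)).mul_const (Cx a b)
    · simpa using ((hasDerivAt_id (0:ℝ)).mul_const (Δ j b)).const_add (H j b)
  have : HasDerivAt (fun t : ℝ => Cyy Cx Cn (H + t • Δ) i j)
      (∑ b, ((∑ a, Δ i a * Cx a b) * (H j b + 0 * Δ j b) +
        (∑ a, (H i a + 0 * Δ i a) * Cx a b) * Δ j b)) 0 := by
    simpa only [← hentry] using key
  convert this using 1
  simp [Matrix.add_apply, Matrix.mul_apply, Matrix.transpose_apply, Finset.sum_add_distrib]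

lemma hasDerivAt_wVec_entry {M N : ℕ} (ux : Fin N → ℝ) (un : Fin M → ℝ)
    (H Δ : Matrix (Fin M) (Fin N) ℝ) (x : Fin N → ℝ) (n : Fin M → ℝ) (i : Fin M) :
    HasDerivAt (fun t : ℝ => wVec ux un (H + t • Δ) x n i)
      ((Δ *ᵥ (x - ux)) i) 0 := by
  have hentry : ∀ t : ℝ, wVec ux un (H + t • Δ) x n i =
      (∑ a, (H i a + t * Δ i a) * x a + n i) - (∑ a, (H i a + t * Δ i a) * ux a + un i) := by
    intro t
    simp [wVec, Matrix.mulVec, dotProduct, Matrix.add_apply, Matrix.smul_apply, smul_eq_mul]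
  have key : HasDerivAt
      (fun t : ℝ => (∑ a, (H i a + t * Δ i a) * x a + n i) -
        (∑ a, (H i a + t * Δ i a) * ux a + un i))
      ((∑ a, Δ i a * x a) - (∑ a, Δ i a * ux a)) 0 := by
    refine HasDerivAt.sub ?_ ?_ <;> refine HasDerivAt.add_const _ ?_ <;>
      refine HasDerivAt.fun_sum fun a _ => ?_
    · simpa using (((hasDerivAt_id (0:ℝ)).mul_const (Δ i a)).const_add (H i a)).mul_const (x a)
    · simpa using (((hasDerivAt_id (0:ℝ)).mul_const (Δ i a)).const_add (H i a)).mul_const (ux a)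
  have : HasDerivAt (fun t : ℝ => wVec ux un (H + t • Δ) x n i)
      ((∑ a, Δ i a * x a) - (∑ a, Δ i a * ux a)) 0 := by
    simpa only [← hentry] using key
  convert this using 1
  simp [Matrix.mulVec, dotProduct, Pi.sub_apply, mul_sub, Finset.sum_sub_distrib]

lemma dot_mulVec' {m k : ℕ} (a : Fin m → ℝ) (Mt : Matrix (Fin m) (Fin k) ℝ) (b : Fin k → ℝ) :
    a ⬝ᵥ Mt *ᵥ b = (Mtᵀ *ᵥ a) ⬝ᵥ b := by
  rw [Matrix.dotProduct_mulVec, Matrix.mulVec_transpose]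

lemma Cyy_posDef {M N : ℕ} {Cx : Matrix (Fin N) (Fin N) ℝ} {Cn : Matrix (Fin M) (Fin M) ℝ}
    (hCx : Cx.PosSemidef) (hCn : Cn.PosDef) (H : Matrix (Fin M) (Fin N) ℝ) :
    (Cyy Cx Cn H).PosDef := by
  have h1 : (H * Cx * Hᵀ).PosSemidef := by
    have := hCx.mul_mul_conjTranspose_same H
    rwa [Matrix.conjTranspose_eq_transpose_of_trivial] at this
  exact Matrix.PosDef.posSemidef_add h1 hCn

section KeyAlgebra

variable {M N : ℕ} (ux : Fin N → ℝ) (Cx : Matrix (Fin N) (Fin N) ℝ)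
  (un : Fin M → ℝ) (Cn : Matrix (Fin M) (Fin M) ℝ)
  (x : Fin N → ℝ) (n : Fin M → ℝ) (H Δ : Matrix (Fin M) (Fin N) ℝ)

lemma Rmat_eq (hCx : Cx.PosSemidef) (hCn : Cn.PosDef) :
    Rmat ux Cx un Cn H x n =
      vecMulVec ((Cyy Cx Cn H)⁻¹ *ᵥ wVec ux un H x n) (x - ux)
      + (Cyy Cx Cn H)⁻¹ * (H * Cx)
      - vecMulVec ((Cyy Cx Cn H)⁻¹ *ᵥ wVec ux un H x n)
          ((Cx * Hᵀ * (Cyy Cx Cn H)⁻¹) *ᵥ wVec ux un H x n) := by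
  set A0 := Cyy Cx Cn H with hA0
  set G := A0⁻¹ with hGdef
  set w := wVec ux un H x n with hw
  have hpd : A0.PosDef := Cyy_posDef hCx hCn H
  have hsym : A0ᵀ = A0 := by
    have := hpd.isHermitian
    rwa [Matrix.IsHermitian, Matrix.conjTranspose_eq_transpose_of_trivial] at this
  have hCxsym : Cxᵀ = Cx := by
    have := hCx.isHermitian
    rwa [Matrix.IsHermitian, Matrix.conjTranspose_eq_transpose_of_trivial] at this
  have hGsym : Gᵀ = G := by rw [hGdef, Matrix.transpose_nonsing_inv, hsym]
  rw [Rmat]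
  have hexp : G * (1 - vecMulVec w w * G) * (H * Cx) =
      G * (H * Cx) - vecMulVec (G *ᵥ w) ((Cx * Hᵀ * G) *ᵥ w) := by
    rw [Matrix.mul_sub, Matrix.mul_one, Matrix.sub_mul]
    rw [← Matrix.mul_assoc G (vecMulVec w w) G, mul_vecMulVec, vecMulVec_mul, vecMulVec_mul]
    congr 1
    rw [hGsym, Matrix.transpose_mul, hCxsym, Matrix.mulVec_mulVec, Matrix.mul_assoc]
  rw [hexp]
  abel

lemma key_trace (hCx : Cx.PosSemidef) (hCn : Cn.PosDef) :
    ((Cyy Cx Cn H).adjugate * (Δ * Cx * Hᵀ + H * Cx * Δᵀ)).trace / (Cyy Cx Cn H).det +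
      ((Δ *ᵥ (x - ux)) ⬝ᵥ (Cyy Cx Cn H)⁻¹ *ᵥ wVec ux un H x n +
        wVec ux un H x n ⬝ᵥ
          (-((Cyy Cx Cn H)⁻¹ * (Δ * Cx * Hᵀ + H * Cx * Δᵀ) * (Cyy Cx Cn H)⁻¹)) *ᵥ
            wVec ux un H x n +
        wVec ux un H x n ⬝ᵥ (Cyy Cx Cn H)⁻¹ *ᵥ (Δ *ᵥ (x - ux))) =
    2 * ((Rmat ux Cx un Cn H x n)ᵀ * Δ).trace := by
  set A0 := Cyy Cx Cn H with hA0
  set G := A0⁻¹ with hGdef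
  set w := wVec ux un H x n with hw
  set v := x - ux with hv
  set B := Δ * Cx * Hᵀ + H * Cx * Δᵀ with hB
  have hpd : A0.PosDef := Cyy_posDef hCx hCn H
  have hdet : A0.det ≠ 0 := hpd.det_pos.ne'
  have hsym : A0ᵀ = A0 := by
    have := hpd.isHermitian
    rwa [Matrix.IsHermitian, Matrix.conjTranspose_eq_transpose_of_trivial] at this
  have hCxsym : Cxᵀ = Cx := by
    have := hCx.isHermitian
    rwa [Matrix.IsHermitian, Matrix.conjTranspose_eq_transpose_of_trivial] at this
  have hGsym : Gᵀ = G := by rw [hGdef, Matrix.transpose_nonsing_inv, hsym]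
  -- adjugate term
  have hadj : A0.adjugate = A0.det • G := by
    rw [hGdef, Matrix.inv_def, Ring.inverse_eq_inv', smul_smul, mul_inv_cancel₀ hdet, one_smul]
  have hterm1 : (A0.adjugate * B).trace / A0.det = (G * B).trace := by
    rw [hadj, Matrix.smul_mul, Matrix.trace_smul, smul_eq_mul, mul_comm, mul_div_assoc,
      div_self hdet, mul_one]
  -- trace (G * B) = 2 * trace ((G * H * Cx)ᵀ * Δ)
  have hGHC : (G * (H * Cx))ᵀ = Cx * Hᵀ * G := by
    rw [Matrix.transpose_mul, Matrix.transpose_mul, hGsym, hCxsym, Matrix.mul_assoc]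
  have ht2 : (G * B).trace = 2 * ((G * (H * Cx))ᵀ * Δ).trace := by
    rw [hB, Matrix.mul_add, Matrix.trace_add, hGHC]
    have e1 : (G * (Δ * Cx * Hᵀ)).trace = (Cx * Hᵀ * G * Δ).trace := by
      rw [Matrix.trace_mul_comm G (Δ * Cx * Hᵀ), Matrix.trace_mul_comm (Cx * Hᵀ * G) Δ]
      simp only [Matrix.mul_assoc]
    have e2 : (G * (H * Cx * Δᵀ)).trace = (Cx * Hᵀ * G * Δ).trace := by
      have htr : (G * (H * Cx * Δᵀ))ᵀ = Δ * (Cx * (Hᵀ * G)) := by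
        simp only [Matrix.transpose_mul, Matrix.transpose_transpose, hGsym, hCxsym,
          Matrix.mul_assoc]
      rw [← Matrix.trace_transpose (G * (H * Cx * Δᵀ)), htr,
        Matrix.trace_mul_comm Δ (Cx * (Hᵀ * G))]
      simp only [Matrix.mul_assoc]
    rw [e1, e2, Matrix.mul_assoc]
    ring
  -- quadratic terms
  set a := G *ᵥ w with ha
  have hq1 : (Δ *ᵥ v) ⬝ᵥ G *ᵥ w = a ⬝ᵥ (Δ *ᵥ v) := dotProduct_comm _ _
  have hq3 : w ⬝ᵥ G *ᵥ (Δ *ᵥ v) = a ⬝ᵥ (Δ *ᵥ v) := by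
    rw [dot_mulVec', hGsym]
  have hq2 : w ⬝ᵥ (-(G * B * G)) *ᵥ w = -(2 * (a ⬝ᵥ (Δ *ᵥ ((Cx * Hᵀ * G) *ᵥ w)))) := by
    rw [Matrix.neg_mulVec, dotProduct_neg]
    congr 1
    have h1 : w ⬝ᵥ (G * B * G) *ᵥ w = a ⬝ᵥ B *ᵥ a := by
      rw [← Matrix.mulVec_mulVec, ← Matrix.mulVec_mulVec, dot_mulVec', hGsym, ha]
    rw [h1, hB, Matrix.add_mulVec, dotProduct_add]
    have h2 : a ⬝ᵥ (H * Cx * Δᵀ) *ᵥ a = a ⬝ᵥ (Δ * Cx * Hᵀ) *ᵥ a := by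
      rw [dot_mulVec']
      rw [Matrix.transpose_mul, Matrix.transpose_mul, Matrix.transpose_transpose, hCxsym]
      rw [dotProduct_comm, Matrix.mul_assoc]
    have h3 : a ⬝ᵥ (Δ * Cx * Hᵀ) *ᵥ a = a ⬝ᵥ (Δ *ᵥ ((Cx * Hᵀ * G) *ᵥ w)) := by
      rw [ha]
      congr 1
      simp only [Matrix.mulVec_mulVec, Matrix.mul_assoc]
    rw [h2, h3]
    ring
  -- Rmat side
  have hR := Rmat_eq ux Cx un Cn x n H hCx hCn
  rw [hR]
  rw [Matrix.transpose_sub, Matrix.transpose_add, Matrix.sub_mul, Matrix.add_mul,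
    Matrix.trace_sub, Matrix.trace_add]
  rw [trace_transpose_vecMulVec_mul, trace_transpose_vecMulVec_mul]
  rw [hterm1, ht2, hq1, hq2, hq3]
  rw [Matrix.mulVec_mulVec]
  ring

end KeyAlgebra

section CompDeriv

variable {M N : ℕ} (ux : Fin N → ℝ) (Cx : Matrix (Fin N) (Fin N) ℝ)
  (un : Fin M → ℝ) (Cn : Matrix (Fin M) (Fin M) ℝ)
  (x : Fin N → ℝ) (n : Fin M → ℝ) (H Δ : Matrix (Fin M) (Fin N) ℝ)

lemma fComp_eq (H' : Matrix (Fin M) (Fin N) ℝ) :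
    fComp ux Cx un Cn H' x n =
      (2 * Real.pi) ^ (-(M : ℝ) / 2) * (Cyy Cx Cn H').det ^ (-(1 : ℝ) / 2) *
        Real.exp (-(1 / 2) *
          (wVec ux un H' x n ⬝ᵥ (Cyy Cx Cn H')⁻¹ *ᵥ wVec ux un H' x n)) := rfl

lemma hasDerivAt_fComp_line (hCx : Cx.PosSemidef) (hCn : Cn.PosDef) :
    HasDerivAt (fun t : ℝ => fComp ux Cx un Cn (H + t • Δ) x n)
      (-(fComp ux Cx un Cn H x n) * ((Rmat ux Cx un Cn H x n)ᵀ * Δ).trace) 0 := by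
  have h0 : H + (0 : ℝ) • Δ = H := by simp
  set A0 := Cyy Cx Cn H with hA0
  set G := A0⁻¹ with hGdef
  set w := wVec ux un H x n with hw
  set v := x - ux with hv
  set B := Δ * Cx * Hᵀ + H * Cx * Δᵀ with hB
  have hpd : A0.PosDef := Cyy_posDef hCx hCn H
  have hdetpos : 0 < A0.det := hpd.det_pos
  have hdet : A0.det ≠ 0 := hdetpos.ne'
  have hAe : ∀ i j, HasDerivAt (fun t : ℝ => Cyy Cx Cn (H + t • Δ) i j) (B i j) 0 :=
    fun i j => hasDerivAt_Cyy_entry Cx Cn H Δ i j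
  have hwe : ∀ i, HasDerivAt (fun t : ℝ => wVec ux un (H + t • Δ) x n i) ((Δ *ᵥ v) i) 0 :=
    fun i => hasDerivAt_wVec_entry ux un H Δ x n i
  have hdetD : HasDerivAt (fun t : ℝ => (Cyy Cx Cn (H + t • Δ)).det)
      ((A0.adjugate * B).trace) 0 := by
    have := hasDerivAt_det (A := fun t : ℝ => Cyy Cx Cn (H + t • Δ)) (A' := B) hAe
    simp only [h0] at this
    exact this
  have hinv : ∀ i j, HasDerivAt (fun t : ℝ => (Cyy Cx Cn (H + t • Δ))⁻¹ i j)
      ((-(G * B * G)) i j) 0 := by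
    intro i j
    have := hasDerivAt_inv_entry (A := fun t : ℝ => Cyy Cx Cn (H + t • Δ)) (A' := B) hAe
      (by simp only [h0]; exact hdet) i j
    simp only [h0] at this
    exact this
  set QD := (Δ *ᵥ v) ⬝ᵥ G *ᵥ w + w ⬝ᵥ (-(G * B * G)) *ᵥ w + w ⬝ᵥ G *ᵥ (Δ *ᵥ v) with hQD
  have hquad : HasDerivAt (fun t : ℝ =>
      wVec ux un (H + t • Δ) x n ⬝ᵥ (Cyy Cx Cn (H + t • Δ))⁻¹ *ᵥ wVec ux un (H + t • Δ) x n)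
      QD 0 := by
    have := hasDerivAt_quadForm (u := fun t : ℝ => wVec ux un (H + t • Δ) x n)
      (u' := Δ *ᵥ v) (B := fun t : ℝ => (Cyy Cx Cn (H + t • Δ))⁻¹) (B' := -(G * B * G))
      hwe hinv
    simp only [h0] at this
    exact this
  have hrpow : HasDerivAt (fun t : ℝ => (Cyy Cx Cn (H + t • Δ)).det ^ (-(1 : ℝ) / 2))
      ((A0.adjugate * B).trace * (-(1 : ℝ) / 2) * A0.det ^ ((-(1 : ℝ) / 2) - 1)) 0 := by
    have := hdetD.rpow_const (p := -(1 : ℝ) / 2) (Or.inl (by simp only [h0]; exact hdet))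
    simp only [h0] at this
    exact this
  have hexp : HasDerivAt (fun t : ℝ => Real.exp (-(1 / 2) *
      (wVec ux un (H + t • Δ) x n ⬝ᵥ (Cyy Cx Cn (H + t • Δ))⁻¹ *ᵥ
        wVec ux un (H + t • Δ) x n)))
      (Real.exp (-(1 / 2) * (w ⬝ᵥ G *ᵥ w)) * (-(1 / 2) * QD)) 0 := by
    have := (hquad.const_mul (-(1 / 2) : ℝ)).exp
    simp only [h0] at this
    exact this
  have hmain : HasDerivAt (fun t : ℝ => fComp ux Cx un Cn (H + t • Δ) x n)
      ((2 * Real.pi) ^ (-(M : ℝ) / 2) *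
          ((A0.adjugate * B).trace * (-(1 : ℝ) / 2) * A0.det ^ ((-(1 : ℝ) / 2) - 1)) *
          Real.exp (-(1 / 2) * (w ⬝ᵥ G *ᵥ w)) +
        (2 * Real.pi) ^ (-(M : ℝ) / 2) * A0.det ^ (-(1 : ℝ) / 2) *
          (Real.exp (-(1 / 2) * (w ⬝ᵥ G *ᵥ w)) * (-(1 / 2) * QD))) 0 := by
    have heq : (fun t : ℝ => fComp ux Cx un Cn (H + t • Δ) x n) =
        fun t : ℝ => (2 * Real.pi) ^ (-(M : ℝ) / 2) *
          (Cyy Cx Cn (H + t • Δ)).det ^ (-(1 : ℝ) / 2) *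
          Real.exp (-(1 / 2) *
            (wVec ux un (H + t • Δ) x n ⬝ᵥ (Cyy Cx Cn (H + t • Δ))⁻¹ *ᵥ
              wVec ux un (H + t • Δ) x n)) := by
      funext t; exact fComp_eq ux Cx un Cn x n _
    rw [heq]
    have := (hrpow.const_mul ((2 * Real.pi) ^ (-(M : ℝ) / 2))).fun_mul hexp
    simp only [h0] at this
    convert this using 1
  convert hmain using 1
  have hKT := key_trace ux Cx un Cn x n H Δ hCx hCn
  rw [← hA0, ← hGdef, ← hw, ← hv, ← hB, ← hQD] at hKT
  have htr : ((Rmat ux Cx un Cn H x n)ᵀ * Δ).trace =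
      ((A0.adjugate * B).trace / A0.det + QD) / 2 := by linarith
  have hf0 : fComp ux Cx un Cn H x n = (2 * Real.pi) ^ (-(M : ℝ) / 2) *
      A0.det ^ (-(1 : ℝ) / 2) * Real.exp (-(1 / 2) * (w ⬝ᵥ G *ᵥ w)) := fComp_eq ux Cx un Cn x n H
  rw [htr, hf0, Real.rpow_sub hdetpos, Real.rpow_one]
  field_simp
  ring

lemma differentiableAt_fComp (hCx : Cx.PosSemidef) (hCn : Cn.PosDef) :
    DifferentiableAt ℝ (fun H' : Matrix (Fin M) (Fin N) ℝ => fComp ux Cx un Cn H' x n) H := by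
  have hcoord : ∀ (i : Fin M) (j : Fin N),
      DifferentiableAt ℝ (fun H' : Matrix (Fin M) (Fin N) ℝ => H' i j) H := by
    intro i j
    have h1 : DifferentiableAt ℝ (fun H' : Matrix (Fin M) (Fin N) ℝ => H' i) H :=
      differentiableAt_pi.mp differentiableAt_id i
    exact differentiableAt_pi.mp h1 j
  have hCyyE : ∀ i j, DifferentiableAt ℝ (fun H' => Cyy Cx Cn H' i j) H := by
    intro i j
    have heq : (fun H' : Matrix (Fin M) (Fin N) ℝ => Cyy Cx Cn H' i j) =
        fun H' => ∑ b, (∑ a, H' i a * Cx a b) * H' j b + Cn i j := by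
      funext H'
      simp [Cyy, Matrix.mul_apply, Matrix.add_apply, Matrix.transpose_apply]
    rw [heq]
    refine DifferentiableAt.add_const _ ?_
    refine DifferentiableAt.fun_sum fun b _ => DifferentiableAt.mul ?_ (hcoord j b)
    exact DifferentiableAt.fun_sum fun a _ => (hcoord i a).mul_const _
  have hdet : DifferentiableAt ℝ (fun H' => (Cyy Cx Cn H').det) H := differentiableAt_det hCyyE
  have hdetne : (Cyy Cx Cn H).det ≠ 0 := (Cyy_posDef hCx hCn H).det_pos.ne'
  have hW : ∀ i, DifferentiableAt ℝ (fun H' => wVec ux un H' x n i) H := by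
    intro i
    have heq : (fun H' : Matrix (Fin M) (Fin N) ℝ => wVec ux un H' x n i) =
        fun H' => (∑ a, H' i a * x a + n i) - (∑ a, H' i a * ux a + un i) := by
      funext H'
      simp [wVec, Matrix.mulVec, dotProduct]
    rw [heq]
    exact ((DifferentiableAt.fun_sum fun a _ => (hcoord i a).mul_const _).add_const _).sub
      ((DifferentiableAt.fun_sum fun a _ => (hcoord i a).mul_const _).add_const _)
  have hinvE : ∀ i j, DifferentiableAt ℝ (fun H' => (Cyy Cx Cn H')⁻¹ i j) H := by
    intro i j
    have heq : (fun H' : Matrix (Fin M) (Fin N) ℝ => (Cyy Cx Cn H')⁻¹ i j) =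
        fun H' => ((Cyy Cx Cn H').det)⁻¹ * (Cyy Cx Cn H').adjugate i j := by
      funext H'
      rw [Matrix.inv_def, Ring.inverse_eq_inv']
      simp [Matrix.smul_apply, smul_eq_mul]
    rw [heq]
    exact (hdet.inv hdetne).mul (differentiableAt_adjugate hCyyE i j)
  have hquad : DifferentiableAt ℝ
      (fun H' => wVec ux un H' x n ⬝ᵥ (Cyy Cx Cn H')⁻¹ *ᵥ wVec ux un H' x n) H := by
    have heq : (fun H' : Matrix (Fin M) (Fin N) ℝ =>
        wVec ux un H' x n ⬝ᵥ (Cyy Cx Cn H')⁻¹ *ᵥ wVec ux un H' x n) =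
        fun H' => ∑ i, wVec ux un H' x n i * ∑ j, (Cyy Cx Cn H')⁻¹ i j * wVec ux un H' x n j := by
      funext H'
      simp [dotProduct, Matrix.mulVec]
    rw [heq]
    exact DifferentiableAt.fun_sum fun i _ => (hW i).mul
      (DifferentiableAt.fun_sum fun j _ => (hinvE i j).mul (hW j))
  have heq : (fun H' : Matrix (Fin M) (Fin N) ℝ => fComp ux Cx un Cn H' x n) =
      fun H' => (2 * Real.pi) ^ (-(M : ℝ) / 2) * (Cyy Cx Cn H').det ^ (-(1 : ℝ) / 2) *
        Real.exp (-(1 / 2) *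
          (wVec ux un H' x n ⬝ᵥ (Cyy Cx Cn H')⁻¹ *ᵥ wVec ux un H' x n)) := by
    funext H'
    exact fComp_eq ux Cx un Cn x n H'
  rw [heq]
  exact ((hdet.rpow_const (Or.inl hdetne)).const_mul _).mul ((hquad.const_mul _).exp)

end CompDeriv

end Aux

/-- For fixed `x, n`, the mixture density along the sample path,
`H ↦ f(y(H)) = ∑ k l, p k q l f^{kl}(y(H))`, is differentiable with gradient
`−∑ k l, p k q l f^{kl}(y(H)) R^{kl}(H)`. -/
theorem hasGradient_mixture_density_along_path
    {M N : ℕ} {K L : Type*} [Fintype K] [Fintype L]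
    (p : K → ℝ≥0) (q : L → ℝ≥0) (hp : ∑ k, p k = 1) (hq : ∑ l, q l = 1)
    (ux : K → Fin N → ℝ) (Cx : K → Matrix (Fin N) (Fin N) ℝ)
    (un : L → Fin M → ℝ) (Cn : L → Matrix (Fin M) (Fin M) ℝ)
    (hCx : ∀ k, (Cx k).PosSemidef) (hCn : ∀ l, (Cn l).PosDef)
    (x : Fin N → ℝ) (n : Fin M → ℝ) (H : Matrix (Fin M) (Fin N) ℝ) :
    ∃ Lf : Matrix (Fin M) (Fin N) ℝ →L[ℝ] ℝ,
      HasFDerivAt (fun H' : Matrix (Fin M) (Fin N) ℝ => mixDen p q ux Cx un Cn H' x n) Lf H ∧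
      ∀ Δ : Matrix (Fin M) (Fin N) ℝ,
        Lf Δ = ((-∑ k, ∑ l, ((p k : ℝ) * (q l : ℝ) * fComp (ux k) (Cx k) (un l) (Cn l) H x n) •
            Rmat (ux k) (Cx k) (un l) (Cn l) H x n)ᵀ * Δ).trace := by
  classical
  have hdiff : DifferentiableAt ℝ
      (fun H' : Matrix (Fin M) (Fin N) ℝ => mixDen p q ux Cx un Cn H' x n) H := by
    simp only [mixDen]
    exact DifferentiableAt.fun_sum fun k _ => DifferentiableAt.fun_sum fun l _ =>
      DifferentiableAt.const_mul
        (differentiableAt_fComp (ux k) (Cx k) (un l) (Cn l) x n H (hCx k) (hCn l)) _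
  refine ⟨fderiv ℝ (fun H' : Matrix (Fin M) (Fin N) ℝ => mixDen p q ux Cx un Cn H' x n) H,
    hdiff.hasFDerivAt, fun Δ => ?_⟩
  have hline : HasDerivAt (fun t : ℝ => H + t • Δ) Δ 0 := by
    have h1 : HasDerivAt (fun t : ℝ => t • Δ) ((1 : ℝ) • Δ) 0 := (hasDerivAt_id 0).smul_const Δ
    have h2 := h1.const_add H
    rwa [one_smul] at h2
  have hF : HasFDerivAt (fun H' : Matrix (Fin M) (Fin N) ℝ => mixDen p q ux Cx un Cn H' x n)
      (fderiv ℝ (fun H' : Matrix (Fin M) (Fin N) ℝ => mixDen p q ux Cx un Cn H' x n) H)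
      ((fun t : ℝ => H + t • Δ) 0) := by
    rw [show (fun t : ℝ => H + t • Δ) 0 = H by simp]
    exact hdiff.hasFDerivAt
  have hcomp : HasDerivAt (fun t : ℝ => mixDen p q ux Cx un Cn (H + t • Δ) x n)
      (fderiv ℝ (fun H' : Matrix (Fin M) (Fin N) ℝ => mixDen p q ux Cx un Cn H' x n) H Δ) 0 := by
    have := HasFDerivAt.comp_hasDerivAt (x := (0 : ℝ)) hF hline
    exact this
  have hsum : HasDerivAt (fun t : ℝ => mixDen p q ux Cx un Cn (H + t • Δ) x n)
      (∑ k, ∑ l, (p k : ℝ) * (q l : ℝ) *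
        (-(fComp (ux k) (Cx k) (un l) (Cn l) H x n) *
          ((Rmat (ux k) (Cx k) (un l) (Cn l) H x n)ᵀ * Δ).trace)) 0 := by
    simp only [mixDen]
    exact HasDerivAt.fun_sum fun k _ => HasDerivAt.fun_sum fun l _ =>
      HasDerivAt.const_mul _
        (hasDerivAt_fComp_line (ux k) (Cx k) (un l) (Cn l) x n H Δ (hCx k) (hCn l))
  have huniq := hcomp.unique hsum
  rw [huniq]
  simp only [Matrix.transpose_neg, Matrix.transpose_sum, Matrix.transpose_smul,
    Matrix.neg_mul, Matrix.sum_mul, Matrix.smul_mul, Matrix.trace_neg, Matrix.trace_sum,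
    Matrix.trace_smul, smul_eq_mul]
  rw [← Finset.sum_neg_distrib]
  refine Finset.sum_congr rfl fun k _ => ?_
  rw [← Finset.sum_neg_distrib]
  refine Finset.sum_congr rfl fun l _ => ?_
  ring
end

section
/- For the linear model y = Hx + n with independent Gaussian mixture inputs and any fixed M×N real matrix H, the dominating function is integrable: E_{x,n}[ Σ_{k,l,r,s ∈ K×L×K×L} ‖w_{klrs}(H, x, n)‖₂ ] < ∞, where the expectation is over the independent Gaussian mixture random vectors x and n and w_{klrs} is evaluated at y = Hx + n. -/
open Matrix MeasureTheory ProbabilityTheory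
open scoped NNReal ENNReal Classical

attribute [local instance] Matrix.normedAddCommGroup Matrix.normedSpace

/-- The square root of a positive semidefinite matrix, as `Matrix.PosSemidef.sqrt` was defined
in the older Mathlib (removed since). -/
noncomputable def Matrix.PosSemidef.sqrt {n : Type*} [Fintype n] [DecidableEq n]
    {A : Matrix n n ℝ} (hA : A.PosSemidef) : Matrix n n ℝ :=
  hA.1.eigenvectorUnitary.1 * diagonal ((↑) ∘ (√·) ∘ hA.1.eigenvalues) *
  (star hA.1.eigenvectorUnitary : Matrix n n ℝ)

/-- The standard Gaussian measure on `ℝ^M`: the product of `M` standard normal laws. -/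
noncomputable def stdGaussian (M : ℕ) : Measure (Fin M → ℝ) :=
  Measure.pi fun _ => gaussianReal 0 1

/-- The multivariate Gaussian law `N(u, C)` on `ℝ^M`, for `C` positive semidefinite, realized
as the pushforward of the standard Gaussian under `z ↦ u + √C z` (junk value otherwise). -/
noncomputable def multiGaussian {M : ℕ} (u : Fin M → ℝ)
    (C : Matrix (Fin M) (Fin M) ℝ) : Measure (Fin M → ℝ) :=
  if h : C.PosSemidef then Measure.map (fun z => u + Matrix.PosSemidef.sqrt h *ᵥ z) (stdGaussian M) else 0

/-- The Frobenius norm of a real matrix. -/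
noncomputable def frobNorm {M N : ℕ} (A : Matrix (Fin M) (Fin N) ℝ) : ℝ :=
  Real.sqrt (∑ i, ∑ j, A i j ^ 2)

section NiceDef

variable {N M : ℕ}

/-- Functions of `(x, n)` that are measurable and of (at most) exponential growth. -/
def Nice (f : (Fin N → ℝ) → (Fin M → ℝ) → ℝ) : Prop :=
  Measurable (Function.uncurry f) ∧
    ∃ C a : ℝ, 0 ≤ C ∧ 0 ≤ a ∧ ∀ x n, |f x n| ≤ C * Real.exp (a * (‖x‖ + ‖n‖))

lemma nice_const (c : ℝ) : Nice (fun (_ : Fin N → ℝ) (_ : Fin M → ℝ) => c) :=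
  ⟨measurable_const, |c|, 0, abs_nonneg c, le_refl 0, fun x n => by simp⟩

lemma Nice.add {f g : (Fin N → ℝ) → (Fin M → ℝ) → ℝ} (hf : Nice f) (hg : Nice g) :
    Nice (fun x n => f x n + g x n) := by
  obtain ⟨mf, C1, a1, hC1, ha1, h1⟩ := hf
  obtain ⟨mg, C2, a2, hC2, ha2, h2⟩ := hg
  refine ⟨mf.add mg, C1 + C2, a1 + a2, by positivity, by positivity, fun x n => ?_⟩
  have hs : (0:ℝ) ≤ ‖x‖ + ‖n‖ := by positivity
  have e1 : Real.exp (a1 * (‖x‖ + ‖n‖)) ≤ Real.exp ((a1 + a2) * (‖x‖ + ‖n‖)) :=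
    Real.exp_le_exp.2 (by nlinarith)
  have e2 : Real.exp (a2 * (‖x‖ + ‖n‖)) ≤ Real.exp ((a1 + a2) * (‖x‖ + ‖n‖)) :=
    Real.exp_le_exp.2 (by nlinarith)
  calc |f x n + g x n| ≤ |f x n| + |g x n| := abs_add_le _ _
    _ ≤ C1 * Real.exp (a1 * (‖x‖ + ‖n‖)) + C2 * Real.exp (a2 * (‖x‖ + ‖n‖)) :=
        add_le_add (h1 x n) (h2 x n)
    _ ≤ C1 * Real.exp ((a1 + a2) * (‖x‖ + ‖n‖)) + C2 * Real.exp ((a1 + a2) * (‖x‖ + ‖n‖)) :=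
        add_le_add (mul_le_mul_of_nonneg_left e1 hC1) (mul_le_mul_of_nonneg_left e2 hC2)
    _ = (C1 + C2) * Real.exp ((a1 + a2) * (‖x‖ + ‖n‖)) := by ring

lemma Nice.mul {f g : (Fin N → ℝ) → (Fin M → ℝ) → ℝ} (hf : Nice f) (hg : Nice g) :
    Nice (fun x n => f x n * g x n) := by
  obtain ⟨mf, C1, a1, hC1, ha1, h1⟩ := hf
  obtain ⟨mg, C2, a2, hC2, ha2, h2⟩ := hg
  refine ⟨mf.mul mg, C1 * C2, a1 + a2, by positivity, by positivity, fun x n => ?_⟩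
  calc |f x n * g x n| = |f x n| * |g x n| := abs_mul _ _
    _ ≤ (C1 * Real.exp (a1 * (‖x‖ + ‖n‖))) * (C2 * Real.exp (a2 * (‖x‖ + ‖n‖))) :=
        mul_le_mul (h1 x n) (h2 x n) (abs_nonneg _) (by positivity)
    _ = (C1 * C2) * (Real.exp (a1 * (‖x‖ + ‖n‖)) * Real.exp (a2 * (‖x‖ + ‖n‖))) := by ring
    _ = (C1 * C2) * Real.exp ((a1 + a2) * (‖x‖ + ‖n‖)) := by rw [← Real.exp_add]; ring_nf

lemma Nice.neg {f : (Fin N → ℝ) → (Fin M → ℝ) → ℝ} (hf : Nice f) :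
    Nice (fun x n => -f x n) := by
  obtain ⟨mf, C, a, hC, ha, h⟩ := hf
  exact ⟨mf.neg, C, a, hC, ha, fun x n => by rw [abs_neg]; exact h x n⟩

lemma Nice.sub {f g : (Fin N → ℝ) → (Fin M → ℝ) → ℝ} (hf : Nice f) (hg : Nice g) :
    Nice (fun x n => f x n - g x n) := by
  simpa [sub_eq_add_neg] using hf.add hg.neg

lemma Nice.abs {f : (Fin N → ℝ) → (Fin M → ℝ) → ℝ} (hf : Nice f) :
    Nice (fun x n => |f x n|) := by
  obtain ⟨mf, C, a, hC, ha, h⟩ := hf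
  exact ⟨mf.abs, C, a, hC, ha, fun x n => by rw [abs_abs]; exact h x n⟩

lemma Nice.finsetSum {ι : Type*} (s : Finset ι) (f : ι → (Fin N → ℝ) → (Fin M → ℝ) → ℝ)
    (h : ∀ i ∈ s, Nice (f i)) : Nice (fun x n => ∑ i ∈ s, f i x n) := by
  classical
  induction s using Finset.induction with
  | empty => simpa using nice_const (N := N) (M := M) 0
  | @insert a s ha ih =>
    simp only [Finset.sum_insert ha]
    exact (h a (Finset.mem_insert_self a s)).add
      (ih fun i hmem => h i (Finset.mem_insert_of_mem hmem))

lemma Nice.mono {f g : (Fin N → ℝ) → (Fin M → ℝ) → ℝ} (hg : Nice g)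
    (mf : Measurable (Function.uncurry f)) (hle : ∀ x n, |f x n| ≤ g x n) : Nice f := by
  obtain ⟨mg, C, a, hC, ha, h⟩ := hg
  exact ⟨mf, C, a, hC, ha, fun x n => le_trans (hle x n) (le_trans (le_abs_self _) (h x n))⟩

lemma nice_coordX (i : Fin N) : Nice (fun (x : Fin N → ℝ) (_ : Fin M → ℝ) => x i) := by
  refine ⟨(measurable_pi_apply i).comp measurable_fst, 1, 1, zero_le_one, zero_le_one,
    fun x n => ?_⟩
  have h1 : |x i| ≤ ‖x‖ := by
    simpa [Real.norm_eq_abs] using norm_le_pi_norm x i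
  have h2 : ‖x‖ + ‖n‖ ≤ Real.exp (‖x‖ + ‖n‖) := by
    linarith [Real.add_one_le_exp (‖x‖ + ‖n‖)]
  have h3 : (0:ℝ) ≤ ‖n‖ := norm_nonneg n
  simp only [one_mul]
  linarith

lemma nice_coordN (i : Fin M) : Nice (fun (_ : Fin N → ℝ) (n : Fin M → ℝ) => n i) := by
  refine ⟨(measurable_pi_apply i).comp measurable_snd, 1, 1, zero_le_one, zero_le_one,
    fun x n => ?_⟩
  have h1 : |n i| ≤ ‖n‖ := by
    simpa [Real.norm_eq_abs] using norm_le_pi_norm n i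
  have h2 : ‖x‖ + ‖n‖ ≤ Real.exp (‖x‖ + ‖n‖) := by
    linarith [Real.add_one_le_exp (‖x‖ + ‖n‖)]
  have h3 : (0:ℝ) ≤ ‖x‖ := norm_nonneg x
  simp only [one_mul]
  linarith

/-- Vector-valued nice functions. -/
def NiceV {a : ℕ} (v : (Fin N → ℝ) → (Fin M → ℝ) → (Fin a → ℝ)) : Prop :=
  ∀ i, Nice (fun x n => v x n i)

/-- Matrix-valued nice functions. -/
def NiceM {a b : ℕ} (F : (Fin N → ℝ) → (Fin M → ℝ) → Matrix (Fin a) (Fin b) ℝ) : Prop :=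
  ∀ i j, Nice (fun x n => F x n i j)

lemma niceV_const {a : ℕ} (v : Fin a → ℝ) :
    NiceV (fun (_ : Fin N → ℝ) (_ : Fin M → ℝ) => v) := fun i => nice_const (v i)

lemma niceM_const {a b : ℕ} (A : Matrix (Fin a) (Fin b) ℝ) :
    NiceM (fun (_ : Fin N → ℝ) (_ : Fin M → ℝ) => A) := fun i j => nice_const (A i j)

lemma NiceV.add {a : ℕ} {v w : (Fin N → ℝ) → (Fin M → ℝ) → (Fin a → ℝ)}
    (hv : NiceV v) (hw : NiceV w) : NiceV (fun x n => v x n + w x n) := fun i => by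
  simpa [Pi.add_apply] using (hv i).add (hw i)

lemma NiceV.sub {a : ℕ} {v w : (Fin N → ℝ) → (Fin M → ℝ) → (Fin a → ℝ)}
    (hv : NiceV v) (hw : NiceV w) : NiceV (fun x n => v x n - w x n) := fun i => by
  simpa [Pi.sub_apply] using (hv i).sub (hw i)

lemma NiceM.add {a b : ℕ} {F G : (Fin N → ℝ) → (Fin M → ℝ) → Matrix (Fin a) (Fin b) ℝ}
    (hF : NiceM F) (hG : NiceM G) : NiceM (fun x n => F x n + G x n) := fun i j => by
  simpa [Matrix.add_apply] using (hF i j).add (hG i j)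

lemma NiceM.sub {a b : ℕ} {F G : (Fin N → ℝ) → (Fin M → ℝ) → Matrix (Fin a) (Fin b) ℝ}
    (hF : NiceM F) (hG : NiceM G) : NiceM (fun x n => F x n - G x n) := fun i j => by
  simpa [Matrix.sub_apply] using (hF i j).sub (hG i j)

lemma NiceM.transpose {a b : ℕ} {F : (Fin N → ℝ) → (Fin M → ℝ) → Matrix (Fin a) (Fin b) ℝ}
    (hF : NiceM F) : NiceM (fun x n => (F x n)ᵀ) := fun i j => by
  simpa [Matrix.transpose_apply] using hF j i

lemma NiceM.mul {a b c : ℕ} {F : (Fin N → ℝ) → (Fin M → ℝ) → Matrix (Fin a) (Fin b) ℝ}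
    {G : (Fin N → ℝ) → (Fin M → ℝ) → Matrix (Fin b) (Fin c) ℝ}
    (hF : NiceM F) (hG : NiceM G) : NiceM (fun x n => F x n * G x n) := fun i j => by
  simp only [Matrix.mul_apply]
  exact Nice.finsetSum _ _ fun k _ => (hF i k).mul (hG k j)

lemma NiceM.mulVec {a b : ℕ} {F : (Fin N → ℝ) → (Fin M → ℝ) → Matrix (Fin a) (Fin b) ℝ}
    {v : (Fin N → ℝ) → (Fin M → ℝ) → (Fin b → ℝ)}
    (hF : NiceM F) (hv : NiceV v) : NiceV (fun x n => F x n *ᵥ v x n) := fun i => by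
  simp only [Matrix.mulVec, dotProduct]
  exact Nice.finsetSum _ _ fun k _ => (hF i k).mul (hv k)

lemma NiceV.dot {a : ℕ} {v w : (Fin N → ℝ) → (Fin M → ℝ) → (Fin a → ℝ)}
    (hv : NiceV v) (hw : NiceV w) : Nice (fun x n => v x n ⬝ᵥ w x n) := by
  simp only [dotProduct]
  exact Nice.finsetSum _ _ fun k _ => (hv k).mul (hw k)

lemma NiceM.vecMulVec {a b : ℕ} {v : (Fin N → ℝ) → (Fin M → ℝ) → (Fin a → ℝ)}
    {w : (Fin N → ℝ) → (Fin M → ℝ) → (Fin b → ℝ)}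
    (hv : NiceV v) (hw : NiceV w) : NiceM (fun x n => vecMulVec (v x n) (w x n)) := fun i j => by
  simpa [Matrix.vecMulVec_apply] using (hv i).mul (hw j)

lemma NiceM.smul {a b : ℕ} {c : (Fin N → ℝ) → (Fin M → ℝ) → ℝ}
    {F : (Fin N → ℝ) → (Fin M → ℝ) → Matrix (Fin a) (Fin b) ℝ}
    (hc : Nice c) (hF : NiceM F) : NiceM (fun x n => c x n • F x n) := fun i j => by
  simpa [Matrix.smul_apply, smul_eq_mul] using hc.mul (hF i j)

end NiceDef

section GaussInt

lemma integrable_exp_mul_gaussianReal (c : ℝ) :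
    Integrable (fun t => Real.exp (c * t)) (gaussianReal 0 1) := by
  rw [gaussianReal_of_var_ne_zero _ one_ne_zero,
    integrable_withDensity_iff (measurable_gaussianPDF _ _)
      (ae_of_all _ fun x => ENNReal.ofReal_lt_top)]
  have h : ∀ x : ℝ, Real.exp (c * x) * (gaussianPDF 0 1 x).toReal
      = ((Real.sqrt (2 * Real.pi))⁻¹ * Real.exp (c ^ 2 / 2)) *
        Real.exp (-(1/2) * (x - c) ^ 2) := by
    intro x
    rw [gaussianPDF, ENNReal.toReal_ofReal (gaussianPDFReal_nonneg _ _ _), gaussianPDFReal]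
    simp only [NNReal.coe_one, mul_one, sub_zero]
    rw [mul_comm (Real.exp (c * x)), mul_assoc, ← Real.exp_add, mul_assoc, ← Real.exp_add]
    congr 1
    ring
  simp only [h]
  exact (((integrable_exp_neg_mul_sq (by norm_num : (0:ℝ) < 1/2)).comp_sub_right c).congr
    (ae_of_all _ fun x => by simp [neg_mul])).const_mul _

lemma integrable_exp_abs_gaussianReal (c : ℝ) :
    Integrable (fun t => Real.exp (c * |t|)) (gaussianReal 0 1) := by
  refine Integrable.mono' ((_root_.integrable_exp_mul_gaussianReal c).add
    (_root_.integrable_exp_mul_gaussianReal (-c)))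
    (Continuous.aestronglyMeasurable (by continuity)) (ae_of_all _ fun t => ?_)
  rw [Real.norm_eq_abs, abs_of_pos (Real.exp_pos _), Pi.add_apply]
  rcases le_or_gt 0 t with ht | ht
  · rw [abs_of_nonneg ht]
    have := (Real.exp_pos (-c * t)).le
    linarith
  · rw [abs_of_neg ht]
    have := (Real.exp_pos (c * t)).le
    have : c * -t = -c * t := by ring
    rw [this]
    linarith [(Real.exp_pos (c * t)).le]

lemma integrable_exp_sum_abs_stdGaussian (M : ℕ) (c : ℝ) :
    Integrable (fun z : Fin M → ℝ => Real.exp (c * ∑ i, |z i|)) (stdGaussian M) := by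
  letI : MeasureSpace ℝ := ⟨gaussianReal 0 1⟩
  haveI : SigmaFinite (volume : Measure ℝ) := by
    change SigmaFinite (gaussianReal 0 1); infer_instance
  have heq : stdGaussian M = (volume : Measure (Fin M → ℝ)) := rfl
  rw [heq]
  simp_rw [Finset.mul_sum, Real.exp_sum]
  exact Integrable.fintype_prod (f := fun (_ : Fin M) (t : ℝ) => Real.exp (c * |t|))
    (fun i => integrable_exp_abs_gaussianReal c)

lemma integrable_exp_norm_multiGaussian {M : ℕ} (u : Fin M → ℝ)
    (C : Matrix (Fin M) (Fin M) ℝ) (a : ℝ) (ha : 0 ≤ a) :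
    Integrable (fun v : Fin M → ℝ => Real.exp (a * ‖v‖)) (multiGaussian u C) := by
  rw [multiGaussian]
  split_ifs with h
  · set S := h.sqrt with hS
    have hmeas : Measurable fun z : Fin M → ℝ => u + S *ᵥ z := by
      refine measurable_const.add ?_
      refine measurable_pi_lambda _ fun i => ?_
      simp only [Matrix.mulVec, dotProduct]
      exact Finset.measurable_sum _ fun j _ => measurable_const.mul (measurable_pi_apply j)
    rw [integrable_map_measure (Continuous.aestronglyMeasurable (by continuity))
      hmeas.aemeasurable]
    set cS : ℝ := ∑ i, ∑ j, |S i j| with hcS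
    have hcS0 : 0 ≤ cS := Finset.sum_nonneg fun i _ => Finset.sum_nonneg fun j _ => abs_nonneg _
    have hSb : ∀ i j, |S i j| ≤ cS := by
      intro i j
      calc |S i j| ≤ ∑ j', |S i j'| :=
            Finset.single_le_sum (f := fun j' => |S i j'|) (fun j' _ => abs_nonneg _)
              (Finset.mem_univ j)
        _ ≤ cS := Finset.single_le_sum (f := fun i' => ∑ j', |S i' j'|)
            (fun i' _ => Finset.sum_nonneg fun j' _ => abs_nonneg _) (Finset.mem_univ i)
    refine Integrable.mono' (((integrable_exp_sum_abs_stdGaussian M (a * cS)).const_mul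
      (Real.exp (a * ‖u‖)))) (Continuous.aestronglyMeasurable ?_) (ae_of_all _ fun z => ?_)
    · have : Continuous fun z : Fin M → ℝ => S *ᵥ z := by
        refine continuous_pi fun i => ?_
        simp only [Matrix.mulVec, dotProduct]
        exact continuous_finset_sum _ fun j _ => continuous_const.mul (continuous_apply j)
      exact Real.continuous_exp.comp (continuous_const.mul (continuous_const.add this).norm)
    · rw [Function.comp_apply, Real.norm_eq_abs, abs_of_pos (Real.exp_pos _),
        ← Real.exp_add]
      refine Real.exp_le_exp.2 ?_
      have hb : ‖u + S *ᵥ z‖ ≤ ‖u‖ + cS * ∑ i, |z i| := by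
        refine le_trans (norm_add_le _ _) (add_le_add_right ?_ _)
        have hnn : (0:ℝ) ≤ cS * ∑ i, |z i| :=
          mul_nonneg hcS0 (Finset.sum_nonneg fun i _ => abs_nonneg _)
        rw [pi_norm_le_iff_of_nonneg hnn]
        intro i
        rw [Real.norm_eq_abs]
        calc |(S *ᵥ z) i| = |∑ j, S i j * z j| := rfl
          _ ≤ ∑ j, |S i j * z j| := Finset.abs_sum_le_sum_abs _ _
          _ ≤ ∑ j, cS * |z j| := by
              refine Finset.sum_le_sum fun j _ => ?_
              rw [abs_mul]
              exact mul_le_mul_of_nonneg_right (hSb i j) (abs_nonneg _)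
          _ = cS * ∑ j, |z j| := by rw [Finset.mul_sum]
      calc a * ‖u + S *ᵥ z‖ ≤ a * (‖u‖ + cS * ∑ i, |z i|) :=
            mul_le_mul_of_nonneg_left hb ha
        _ = a * ‖u‖ + a * cS * ∑ i, |z i| := by ring
  · exact integrable_zero_measure

end GaussInt


section App

variable {M N : ℕ}

lemma cyy_posSemidef {Cx : Matrix (Fin N) (Fin N) ℝ} {Cn : Matrix (Fin M) (Fin M) ℝ}
    (hCx : Cx.PosSemidef) (hCn : Cn.PosSemidef) (H : Matrix (Fin M) (Fin N) ℝ) :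
    (Cyy Cx Cn H).PosSemidef := by
  rw [Cyy]
  have h := hCx.mul_mul_conjTranspose_same H
  rw [Matrix.conjTranspose_eq_transpose_of_trivial] at h
  exact h.add hCn

lemma fComp_nonneg {ux : Fin N → ℝ} {Cx : Matrix (Fin N) (Fin N) ℝ}
    {un : Fin M → ℝ} {Cn : Matrix (Fin M) (Fin M) ℝ} {H : Matrix (Fin M) (Fin N) ℝ}
    (h : (Cyy Cx Cn H).PosSemidef) (x : Fin N → ℝ) (n : Fin M → ℝ) :
    0 ≤ fComp ux Cx un Cn H x n := by
  rw [fComp, gaussianPdf]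
  have h1 : (0:ℝ) ≤ (2 * Real.pi) ^ (-(M:ℝ)/2) := Real.rpow_nonneg (by positivity) _
  have hd : (0:ℝ) ≤ (Cyy Cx Cn H).det := by
    exact h.det_nonneg
  have h2 : (0:ℝ) ≤ (Cyy Cx Cn H).det ^ (-(1:ℝ)/2) := Real.rpow_nonneg hd _
  positivity

lemma measurable_fComp (ux : Fin N → ℝ) (Cx : Matrix (Fin N) (Fin N) ℝ)
    (un : Fin M → ℝ) (Cn : Matrix (Fin M) (Fin M) ℝ) (H : Matrix (Fin M) (Fin N) ℝ) :
    Measurable (Function.uncurry (fComp ux Cx un Cn H)) := by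
  have hv : ∀ i, Measurable (fun p : (Fin N → ℝ) × (Fin M → ℝ) =>
      ((H *ᵥ p.1 + p.2) - (H *ᵥ ux + un)) i) := by
    intro i
    simp only [Pi.sub_apply, Pi.add_apply, Matrix.mulVec, dotProduct]
    fun_prop
  have hq : Measurable (fun p : (Fin N → ℝ) × (Fin M → ℝ) =>
      (-(1/2) : ℝ) * (((H *ᵥ p.1 + p.2) - (H *ᵥ ux + un)) ⬝ᵥ
        (Cyy Cx Cn H)⁻¹ *ᵥ ((H *ᵥ p.1 + p.2) - (H *ᵥ ux + un)))) := by
    refine measurable_const.mul ?_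
    simp only [dotProduct, Matrix.mulVec]
    refine Finset.measurable_sum _ fun i _ => (hv i).mul ?_
    exact Finset.measurable_sum _ fun j _ => measurable_const.mul (hv j)
  exact measurable_const.mul (Real.measurable_exp.comp hq)

lemma niceV_wVec (ux : Fin N → ℝ) (un : Fin M → ℝ) (H : Matrix (Fin M) (Fin N) ℝ) :
    NiceV (wVec ux un H) := by
  have h1 : NiceV (fun (x : Fin N → ℝ) (_ : Fin M → ℝ) => H *ᵥ x) :=
    (niceM_const H).mulVec (fun i => nice_coordX i)
  have h2 : NiceV (fun (_ : Fin N → ℝ) (n : Fin M → ℝ) => n) := fun i => nice_coordN i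
  exact NiceV.sub (h1.add h2) (niceV_const _)

lemma niceV_uxyP (ux : Fin N → ℝ) (Cx : Matrix (Fin N) (Fin N) ℝ)
    (un : Fin M → ℝ) (Cn : Matrix (Fin M) (Fin M) ℝ) (H : Matrix (Fin M) (Fin N) ℝ) :
    NiceV (uxyP ux Cx un Cn H) :=
  (niceV_const ux).add ((niceM_const (Cx * Hᵀ)).mulVec
    ((niceM_const (Cyy Cx Cn H)⁻¹).mulVec (niceV_wVec ux un H)))

lemma niceM_Rmat (ux : Fin N → ℝ) (Cx : Matrix (Fin N) (Fin N) ℝ)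
    (un : Fin M → ℝ) (Cn : Matrix (Fin M) (Fin M) ℝ) (H : Matrix (Fin M) (Fin N) ℝ) :
    NiceM (Rmat ux Cx un Cn H) := by
  have hw := niceV_wVec (M := M) ux un H
  have hxu : NiceV (fun (x : Fin N → ℝ) (_ : Fin M → ℝ) => x - ux) :=
    NiceV.sub (fun i => nice_coordX i) (niceV_const ux)
  exact NiceM.add
    (NiceM.vecMulVec ((niceM_const (Cyy Cx Cn H)⁻¹).mulVec hw) hxu)
    (((niceM_const (Cyy Cx Cn H)⁻¹).mul ((niceM_const 1).sub
      ((NiceM.vecMulVec hw hw).mul (niceM_const (Cyy Cx Cn H)⁻¹)))).mul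
      (niceM_const (H * Cx)))

lemma niceM_Cmat (ux₁ : Fin N → ℝ) (Cx₁ : Matrix (Fin N) (Fin N) ℝ)
    (un₁ : Fin M → ℝ) (Cn₁ : Matrix (Fin M) (Fin M) ℝ)
    (ux₂ : Fin N → ℝ) (Cx₂ : Matrix (Fin N) (Fin N) ℝ)
    (un₂ : Fin M → ℝ) (Cn₂ : Matrix (Fin M) (Fin M) ℝ) (H : Matrix (Fin M) (Fin N) ℝ) :
    NiceM (Cmat ux₁ Cx₁ un₁ Cn₁ ux₂ Cx₂ un₂ Cn₂ H) :=
  NiceM.vecMulVec ((niceM_const (Cyy Cx₁ Cn₁ H)⁻¹).mulVec (niceV_wVec ux₁ un₁ H))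
    ((niceM_const (Cx₁ * Hᵀ * (Cyy Cx₁ Cn₁ H)⁻¹)ᵀ).mulVec (niceV_uxyP ux₂ Cx₂ un₂ Cn₂ H))

lemma niceM_Dmat (ux₁ : Fin N → ℝ) (Cx₁ : Matrix (Fin N) (Fin N) ℝ)
    (un₁ : Fin M → ℝ) (Cn₁ : Matrix (Fin M) (Fin M) ℝ)
    (ux₂ : Fin N → ℝ) (Cx₂ : Matrix (Fin N) (Fin N) ℝ)
    (un₂ : Fin M → ℝ) (Cn₂ : Matrix (Fin M) (Fin M) ℝ) (H : Matrix (Fin M) (Fin N) ℝ) :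
    NiceM (Dmat ux₁ Cx₁ un₁ Cn₁ ux₂ Cx₂ un₂ Cn₂ H) := by
  have hC := niceM_Cmat ux₁ Cx₁ un₁ Cn₁ ux₂ Cx₂ un₂ Cn₂ H
  have hxu : NiceV (fun (x : Fin N → ℝ) (_ : Fin M → ℝ) => x - ux₁) :=
    NiceV.sub (fun i => nice_coordX i) (niceV_const ux₁)
  exact NiceM.add (NiceM.sub
    (NiceM.vecMulVec ((niceM_const (Cyy Cx₁ Cn₁ H)⁻¹).mulVec (niceV_wVec ux₁ un₁ H))
      ((niceM_const Cx₁ᵀ).mulVec (niceV_uxyP ux₂ Cx₂ un₂ Cn₂ H)))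
    ((hC.add hC.transpose).mul (niceM_const (H * Cx₁))))
    (NiceM.vecMulVec ((niceM_const ((Cyy Cx₁ Cn₁ H)⁻¹ * H * Cx₁)).mulVec
      (niceV_uxyP ux₂ Cx₂ un₂ Cn₂ H)) hxu)

lemma nice_zCoef {K L : Type*} (ux : K → Fin N → ℝ) (Cx : K → Matrix (Fin N) (Fin N) ℝ)
    (un : L → Fin M → ℝ) (Cn : L → Matrix (Fin M) (Fin M) ℝ) (H : Matrix (Fin M) (Fin N) ℝ)
    (k : K) (l : L) (r : K) (s : L) :
    Nice (fun x n => zCoef ux Cx un Cn H x n k l r s) :=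
  NiceV.dot (niceV_uxyP (ux k) (Cx k) (un l) (Cn l) H)
    (niceV_uxyP (ux r) (Cx r) (un s) (Cn s) H)

end App


section App2

variable {M N : ℕ} {K L : Type*} [Fintype K] [Fintype L]

lemma measurable_mixDen (p : K → ℝ≥0) (q : L → ℝ≥0)
    (ux : K → Fin N → ℝ) (Cx : K → Matrix (Fin N) (Fin N) ℝ)
    (un : L → Fin M → ℝ) (Cn : L → Matrix (Fin M) (Fin M) ℝ) (H : Matrix (Fin M) (Fin N) ℝ) :
    Measurable (Function.uncurry (mixDen p q ux Cx un Cn H)) := by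
  unfold Function.uncurry mixDen
  refine Finset.measurable_sum _ fun k _ => Finset.measurable_sum _ fun l _ => ?_
  exact measurable_const.mul (measurable_fComp (ux k) (Cx k) (un l) (Cn l) H)

lemma niceM_ratioTerm (p : K → ℝ≥0) (q : L → ℝ≥0)
    (ux : K → Fin N → ℝ) (Cx : K → Matrix (Fin N) (Fin N) ℝ)
    (un : L → Fin M → ℝ) (Cn : L → Matrix (Fin M) (Fin M) ℝ) (H : Matrix (Fin M) (Fin N) ℝ)
    (hpsd : ∀ k l, (Cyy (Cx k) (Cn l) H).PosSemidef) (k : K) (l : L) (r : K) (s : L) :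
    NiceM (fun x n => (2 * zCoef ux Cx un Cn H x n k l r s / mixDen p q ux Cx un Cn H x n) •
        ∑ k', ∑ l', ((p k' : ℝ) * (q l' : ℝ) * fComp (ux k') (Cx k') (un l') (Cn l') H x n) •
          Rmat (ux k') (Cx k') (un l') (Cn l') H x n) := by
  intro i j
  have hz := nice_zCoef ux Cx un Cn H k l r s
  have hR : ∀ (k' : K) (l' : L), Nice (fun x n => Rmat (ux k') (Cx k') (un l') (Cn l') H x n i j) :=
    fun k' l' => niceM_Rmat (ux k') (Cx k') (un l') (Cn l') H i j
  -- the dominating nice function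
  have hg : Nice (fun x n => ∑ k' : K, ∑ l' : L,
      2 * |zCoef ux Cx un Cn H x n k l r s| *
        |Rmat (ux k') (Cx k') (un l') (Cn l') H x n i j|) := by
    refine Nice.finsetSum _ _ fun k' _ => Nice.finsetSum _ _ fun l' _ => ?_
    exact ((nice_const 2).mul hz.abs).mul (hR k' l').abs
  refine Nice.mono hg ?_ ?_
  · -- measurability of the entry
    have hze : Measurable (Function.uncurry fun x n => zCoef ux Cx un Cn H x n k l r s) := hz.1
    have hde := measurable_mixDen p q ux Cx un Cn H
    have hmul : Measurable (Function.uncurry fun x n =>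
        (∑ k' : K, ∑ l' : L, ((p k' : ℝ) * (q l' : ℝ) *
          fComp (ux k') (Cx k') (un l') (Cn l') H x n) •
          Rmat (ux k') (Cx k') (un l') (Cn l') H x n) i j) := by
      unfold Function.uncurry
      simp only [Matrix.sum_apply, Matrix.smul_apply, smul_eq_mul]
      refine Finset.measurable_sum _ fun k' _ => Finset.measurable_sum _ fun l' _ => ?_
      exact (measurable_const.mul (measurable_fComp (ux k') (Cx k') (un l') (Cn l') H)).mul
        (hR k' l').1
    exact ((measurable_const.mul hze).div hde).mul hmul
  · -- the pointwise bound
    intro x n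
    simp only [Matrix.smul_apply, Matrix.sum_apply, smul_eq_mul]
    set z := zCoef ux Cx un Cn H x n k l r s with hzdef
    set den := mixDen p q ux Cx un Cn H x n with hden
    have hcnn : ∀ (k' : K) (l' : L),
        0 ≤ (p k' : ℝ) * (q l' : ℝ) * fComp (ux k') (Cx k') (un l') (Cn l') H x n :=
      fun k' l' => mul_nonneg (mul_nonneg (p k').coe_nonneg (q l').coe_nonneg)
        (fComp_nonneg (hpsd k' l') x n)
    have hdnn : 0 ≤ den := Finset.sum_nonneg fun k' _ => Finset.sum_nonneg fun l' _ => hcnn k' l'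
    have hcle : ∀ (k' : K) (l' : L),
        (p k' : ℝ) * (q l' : ℝ) * fComp (ux k') (Cx k') (un l') (Cn l') H x n ≤ den := by
      intro k' l'
      calc (p k' : ℝ) * (q l' : ℝ) * fComp (ux k') (Cx k') (un l') (Cn l') H x n
          ≤ ∑ l'' : L, (p k' : ℝ) * (q l'' : ℝ) *
              fComp (ux k') (Cx k') (un l'') (Cn l'') H x n :=
            Finset.single_le_sum (f := fun l'' => (p k' : ℝ) * (q l'' : ℝ) *
              fComp (ux k') (Cx k') (un l'') (Cn l'') H x n)
              (fun l'' _ => hcnn k' l'') (Finset.mem_univ l')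
        _ ≤ den :=
            Finset.single_le_sum (f := fun k'' => ∑ l'' : L, (p k'' : ℝ) * (q l'' : ℝ) *
              fComp (ux k'') (Cx k'') (un l'') (Cn l'') H x n)
              (fun k'' _ => Finset.sum_nonneg fun l'' _ => hcnn k'' l'')
              (Finset.mem_univ k')
    have hSentry : (∑ k' : K, ∑ l' : L, ((p k' : ℝ) * (q l' : ℝ) *
          fComp (ux k') (Cx k') (un l') (Cn l') H x n) •
          Rmat (ux k') (Cx k') (un l') (Cn l') H x n) i j
        = ∑ k' : K, ∑ l' : L, ((p k' : ℝ) * (q l' : ℝ) *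
          fComp (ux k') (Cx k') (un l') (Cn l') H x n) *
          Rmat (ux k') (Cx k') (un l') (Cn l') H x n i j := by
      simp [Matrix.sum_apply]
    set T := ∑ k' : K, ∑ l' : L, |Rmat (ux k') (Cx k') (un l') (Cn l') H x n i j| with hT
    have hTnn : 0 ≤ T := Finset.sum_nonneg fun k' _ => Finset.sum_nonneg fun l' _ => abs_nonneg _
    have hgoalrhs : (∑ k' : K, ∑ l' : L, 2 * |z| *
        |Rmat (ux k') (Cx k') (un l') (Cn l') H x n i j|) = 2 * |z| * T := by
      rw [hT, Finset.mul_sum]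
      exact Finset.sum_congr rfl fun k' _ => by rw [Finset.mul_sum]
    rw [hgoalrhs]
    rcases eq_or_lt_of_le hdnn with hd0 | hdpos
    · rw [← hd0, div_zero, zero_mul, abs_zero]
      positivity
    · have habs : |2 * z / den| = 2 * |z| / den := by
        rw [abs_div, abs_mul, abs_two, abs_of_pos hdpos]
      have hS : |∑ k' : K, ∑ l' : L, ((p k' : ℝ) * (q l' : ℝ) *
            fComp (ux k') (Cx k') (un l') (Cn l') H x n) *
            Rmat (ux k') (Cx k') (un l') (Cn l') H x n i j| ≤ den * T := by
        calc |∑ k' : K, ∑ l' : L, ((p k' : ℝ) * (q l' : ℝ) *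
              fComp (ux k') (Cx k') (un l') (Cn l') H x n) *
              Rmat (ux k') (Cx k') (un l') (Cn l') H x n i j|
            ≤ ∑ k' : K, |∑ l' : L, ((p k' : ℝ) * (q l' : ℝ) *
              fComp (ux k') (Cx k') (un l') (Cn l') H x n) *
              Rmat (ux k') (Cx k') (un l') (Cn l') H x n i j| :=
              Finset.abs_sum_le_sum_abs _ _
          _ ≤ ∑ k' : K, ∑ l' : L, |((p k' : ℝ) * (q l' : ℝ) *
              fComp (ux k') (Cx k') (un l') (Cn l') H x n) *
              Rmat (ux k') (Cx k') (un l') (Cn l') H x n i j| :=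
              Finset.sum_le_sum fun k' _ => Finset.abs_sum_le_sum_abs _ _
          _ ≤ ∑ k' : K, ∑ l' : L, den *
              |Rmat (ux k') (Cx k') (un l') (Cn l') H x n i j| := by
              refine Finset.sum_le_sum fun k' _ => Finset.sum_le_sum fun l' _ => ?_
              rw [abs_mul, abs_of_nonneg (hcnn k' l')]
              exact mul_le_mul_of_nonneg_right (hcle k' l') (abs_nonneg _)
          _ = den * T := by
              rw [hT, Finset.mul_sum]
              exact Finset.sum_congr rfl fun k' _ => by rw [Finset.mul_sum]
      calc |2 * z / den * (∑ k' : K, ∑ l' : L, ((p k' : ℝ) * (q l' : ℝ) *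
            fComp (ux k') (Cx k') (un l') (Cn l') H x n) *
            Rmat (ux k') (Cx k') (un l') (Cn l') H x n i j)|
          = |2 * z / den| * |∑ k' : K, ∑ l' : L, ((p k' : ℝ) * (q l' : ℝ) *
            fComp (ux k') (Cx k') (un l') (Cn l') H x n) *
            Rmat (ux k') (Cx k') (un l') (Cn l') H x n i j| := abs_mul _ _
        _ ≤ (2 * |z| / den) * (den * T) := by
            rw [habs]
            exact mul_le_mul_of_nonneg_left hS (by positivity)
        _ = 2 * |z| * T := by field_simp
    
lemma niceM_wMat (p : K → ℝ≥0) (q : L → ℝ≥0)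
    (ux : K → Fin N → ℝ) (Cx : K → Matrix (Fin N) (Fin N) ℝ)
    (un : L → Fin M → ℝ) (Cn : L → Matrix (Fin M) (Fin M) ℝ) (H : Matrix (Fin M) (Fin N) ℝ)
    (hpsd : ∀ k l, (Cyy (Cx k) (Cn l) H).PosSemidef) (k : K) (l : L) (r : K) (s : L) :
    NiceM (fun x n => wMat p q ux Cx un Cn H x n k l r s) := by
  have hz := nice_zCoef ux Cx un Cn H k l r s
  exact NiceM.add (NiceM.add
    (NiceM.smul hz.neg ((niceM_Rmat (ux k) (Cx k) (un l) (Cn l) H).add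
      (niceM_Rmat (ux r) (Cx r) (un s) (Cn s) H)))
    ((niceM_Dmat (ux k) (Cx k) (un l) (Cn l) (ux r) (Cx r) (un s) (Cn s) H).add
      (niceM_Dmat (ux r) (Cx r) (un s) (Cn s) (ux k) (Cx k) (un l) (Cn l) H)))
    (niceM_ratioTerm p q ux Cx un Cn H hpsd k l r s)

lemma nice_frobNorm_of_niceM {a b : ℕ} {F : (Fin N → ℝ) → (Fin M → ℝ) → Matrix (Fin a) (Fin b) ℝ}
    (hF : NiceM F) : Nice (fun x n => frobNorm (F x n)) := by
  have hg : Nice (fun x n => 1 + ∑ i : Fin a, ∑ j : Fin b, (F x n i j) ^ 2) := by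
    refine (nice_const 1).add (Nice.finsetSum _ _ fun i _ => Nice.finsetSum _ _ fun j _ => ?_)
    have := (hF i j).mul (hF i j)
    simpa [pow_two] using this
  refine Nice.mono hg ?_ ?_
  · unfold Function.uncurry frobNorm
    refine Real.continuous_sqrt.measurable.comp ?_
    refine Finset.measurable_sum _ fun i _ => Finset.measurable_sum _ fun j _ => ?_
    exact ((hF i j).1).pow measurable_const
  · intro x n
    rw [frobNorm]
    have hs : (0:ℝ) ≤ ∑ i : Fin a, ∑ j : Fin b, (F x n i j) ^ 2 :=
      Finset.sum_nonneg fun i _ => Finset.sum_nonneg fun j _ => sq_nonneg _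
    rw [abs_of_nonneg (Real.sqrt_nonneg _)]
    set t := ∑ i : Fin a, ∑ j : Fin b, (F x n i j) ^ 2
    calc Real.sqrt t ≤ Real.sqrt ((1 + t) ^ 2) := Real.sqrt_le_sqrt (by nlinarith)
      _ = 1 + t := by rw [Real.sqrt_sq (by linarith)]

end App2

/-- For the linear model with independent Gaussian-mixture inputs and any
fixed `H`, the dominating function is integrable:
`E_{x,n} [∑ klrs, ‖w_{klrs}(H, x, n)‖₂] < ∞`. -/
theorem integrable_dominating_function
    {Ω : Type*} [MeasureSpace Ω] [IsProbabilityMeasure (ℙ : Measure Ω)]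
    {M N : ℕ} {K L : Type*} [Fintype K] [Fintype L]
    (p : K → ℝ≥0) (q : L → ℝ≥0) (hp : ∑ k, p k = 1) (hq : ∑ l, q l = 1)
    (ux : K → Fin N → ℝ) (Cx : K → Matrix (Fin N) (Fin N) ℝ)
    (un : L → Fin M → ℝ) (Cn : L → Matrix (Fin M) (Fin M) ℝ)
    (hCx : ∀ k, (Cx k).PosSemidef) (hCn : ∀ l, (Cn l).PosDef)
    (H : Matrix (Fin M) (Fin N) ℝ)
    (x : Ω → Fin N → ℝ) (n : Ω → Fin M → ℝ)
    (hx : Measurable x) (hn : Measurable n)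
    (hindep : IndepFun x n ℙ)
    (hlawx : Measure.map x ℙ = ∑ k, (p k : ℝ≥0∞) • multiGaussian (ux k) (Cx k))
    (hlawn : Measure.map n ℙ = ∑ l, (q l : ℝ≥0∞) • multiGaussian (un l) (Cn l)) :
    Integrable (fun ω =>
      ∑ k, ∑ l, ∑ r, ∑ s, frobNorm (wMat p q ux Cx un Cn H (x ω) (n ω) k l r s)) ℙ := by
  classical
  have hpsd : ∀ k l, (Cyy (Cx k) (Cn l) H).PosSemidef :=
    fun k l => cyy_posSemidef (hCx k) (hCn l).posSemidef H
  have hG : Nice (fun x n => ∑ k : K, ∑ l : L, ∑ r : K, ∑ s : L,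
      frobNorm (wMat p q ux Cx un Cn H x n k l r s)) := by
    refine Nice.finsetSum _ _ fun k _ => Nice.finsetSum _ _ fun l _ => ?_
    refine Nice.finsetSum _ _ fun r _ => Nice.finsetSum _ _ fun s _ => ?_
    exact nice_frobNorm_of_niceM (niceM_wMat p q ux Cx un Cn H hpsd k l r s)
  obtain ⟨hGm, C, a, hC, ha, hGb⟩ := hG
  have hmx : Measurable fun v : Fin N → ℝ => Real.exp (a * ‖v‖) :=
    Real.measurable_exp.comp (measurable_const.mul measurable_norm)
  have hmn : Measurable fun v : Fin M → ℝ => Real.exp (a * ‖v‖) :=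
    Real.measurable_exp.comp (measurable_const.mul measurable_norm)
  have hintx : Integrable (fun v : Fin N → ℝ => Real.exp (a * ‖v‖)) (Measure.map x ℙ) := by
    rw [hlawx, integrable_finset_sum_measure]
    intro k _
    exact (integrable_exp_norm_multiGaussian (ux k) (Cx k) a ha).smul_measure ENNReal.coe_ne_top
  have hintn : Integrable (fun v : Fin M → ℝ => Real.exp (a * ‖v‖)) (Measure.map n ℙ) := by
    rw [hlawn, integrable_finset_sum_measure]
    intro l _
    exact (integrable_exp_norm_multiGaussian (un l) (Cn l) a ha).smul_measure ENNReal.coe_ne_top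
  have hix : Integrable (fun ω => Real.exp (a * ‖x ω‖)) ℙ :=
    (integrable_map_measure hmx.aestronglyMeasurable hx.aemeasurable).mp hintx
  have hin : Integrable (fun ω => Real.exp (a * ‖n ω‖)) ℙ :=
    (integrable_map_measure hmn.aestronglyMeasurable hn.aemeasurable).mp hintn
  have hie : IndepFun (fun ω => Real.exp (a * ‖x ω‖)) (fun ω => Real.exp (a * ‖n ω‖)) ℙ :=
    hindep.comp hmx hmn
  have hbound : Integrable (fun ω => C *
      (Real.exp (a * ‖x ω‖) * Real.exp (a * ‖n ω‖))) ℙ := by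
    have h1 := hie.integrable_mul hix hin
    have h2 := h1.const_mul C
    exact h2.congr (ae_of_all _ fun ω => by simp [Pi.mul_apply])
  refine Integrable.mono' hbound ?_ (ae_of_all _ fun ω => ?_)
  · exact (hGm.comp (hx.prodMk hn)).aestronglyMeasurable
  · rw [Real.norm_eq_abs]
    refine le_of_le_of_eq (hGb (x ω) (n ω)) ?_
    rw [mul_add, Real.exp_add]
end
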